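/- arXiv:1702.01126 — 7 statements merged into one kernel-verified Lean document; each statement's English description precedes it below -/
import Mathlib

section
/- A tournament on n = 2r+1 vertices has the maximal possible number of cyclic triads among all tournaments on n vertices if and only if every vertex has in-degree exactly r. -/
noncomputable def inDeg {V : Type*} (r : V → V → Prop) (v : V) : ℕ := {u : V | r u v}.ncard

def IsTournament {V : Type*} (r : V → V → Prop) : Prop :=
  (∀ v : V, ¬ r v v) ∧ ∀ u v : V, u ≠ v → (r u v ↔ ¬ r v u)

def CyclicTriad {V : Type*} (r : V → V → Prop) (t : Finset V) : Prop :=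
  t.card = 3 ∧ ∃ a ∈ t, ∃ b ∈ t, ∃ c ∈ t,
    a ≠ b ∧ b ≠ c ∧ a ≠ c ∧ r a b ∧ r b c ∧ r c a

noncomputable def cyclicTriadCount {V : Type*} (r : V → V → Prop) : ℕ :=
  {t : Finset V | CyclicTriad r t}.ncard

/-!
Call `v` a sink of a vertex set `t` if every other vertex of `t` beats `v`. In a tournament a
pair has exactly one sink, and a triple has one sink if it is transitive and none if it is
cyclic. Counting the pairs `(t, v)` with `v` a sink of the `(k + 1)`-set `t` vertex by vertex gives
`∑ v, (d v).choose k`, where `d v` is the in-degree. Hence `∑ v, d v = n.choose 2 = n * r` and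
the number of cyclic triads is `n.choose 3 - ∑ v, (d v).choose 2`, while
`∑ v, (d v).choose 2 - n * r.choose 2 = (∑ v, (d v - r) ^ 2) / 2`. So the count is at most
`n.choose 3 - n * r.choose 2`, with equality exactly for regular tournaments, and the rotational
tournament on `ℤ / (2 r + 1)` is regular.
-/

open Finset

section Sinks

variable {V : Type*} {T : V → V → Prop}

def IsSink (T : V → V → Prop) (t : Finset V) (v : V) : Prop :=
  v ∈ t ∧ ∀ u ∈ t, u ≠ v → T u v

lemma IsTournament.asymm (hT : IsTournament T) {u v : V} (h : T u v) : ¬ T v u := by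
  rcases eq_or_ne u v with rfl | huv
  · exact hT.1 u
  · exact (hT.2 u v huv).1 h

lemma IsTournament.rel_of_not_rel (hT : IsTournament T) {u v : V} (huv : u ≠ v)
    (h : ¬ T u v) : T v u :=
  (hT.2 v u huv.symm).2 h

lemma IsTournament.isSink_unique (hT : IsTournament T) {t : Finset V} {v w : V}
    (hv : IsSink T t v) (hw : IsSink T t w) : v = w := by
  by_contra hvw
  exact hT.asymm (hw.2 v hv.1 hvw) (hv.2 w hw.1 (Ne.symm hvw))

lemma IsTournament.exists_isSink_of_card_eq_two (hT : IsTournament T) {t : Finset V}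
    (ht : #t = 2) : ∃ v, IsSink T t v := by
  classical
  obtain ⟨a, b, hab, rfl⟩ := card_eq_two.1 ht
  by_cases h : T a b
  · exact ⟨b, by simp, by simp [h]⟩
  · exact ⟨a, by simp, by simp [hT.rel_of_not_rel hab h, hab.symm]⟩

lemma IsTournament.exists_isSink_iff_not_cyclicTriad (hT : IsTournament T) {t : Finset V}
    (ht : #t = 3) : (∃ v, IsSink T t v) ↔ ¬ CyclicTriad T t := by
  classical
  obtain ⟨a, b, c, hab, hac, hbc, rfl⟩ := card_eq_three.1 ht
  constructor
  · rintro ⟨v, hv, hsink⟩ ⟨-, x, hx, y, hy, z, hz, hxy, hyz, hxz, Txy, Tyz, Tzx⟩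
    have hxyz : ({x, y, z} : Finset V) = {a, b, c} :=
      eq_of_subset_of_card_le (by simp [insert_subset_iff, hx, hy, hz])
        (by rw [ht, card_eq_three.2 ⟨x, y, z, hxy, hxz, hyz, rfl⟩])
    rw [← hxyz] at hv hsink
    simp only [mem_insert, mem_singleton] at hv
    rcases hv with rfl | rfl | rfl
    · exact hT.asymm Txy (hsink y (by simp) hxy.symm)
    · exact hT.asymm Tyz (hsink z (by simp) hyz.symm)
    · exact hT.asymm Tzx (hsink x (by simp) hxz)
  · intro hacyclic
    by_contra hnone
    have hout : ∀ v ∈ ({a, b, c} : Finset V), 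
        ∃ u ∈ ({a, b, c} : Finset V), u ≠ v ∧ T v u := by
      intro v hv
      by_contra! h
      exact hnone ⟨v, hv, fun u hu huv => hT.rel_of_not_rel huv.symm (h u hu huv)⟩
    simp only [mem_insert, mem_singleton, forall_eq_or_imp, forall_eq, exists_eq_or_imp]
      at hout
    obtain ⟨outA, outB, outC⟩ := hout
    apply hacyclic
    by_cases Tab : T a b
    · have Tbc : T b c := by grind [hT.asymm]
      have Tca : T c a := by grind [hT.asymm]
      exact ⟨ht, a, by simp, b, by simp, c, by simp, hab, hbc, hac, Tab, Tbc, Tca⟩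
    · have Tac : T a c := by grind [hT.asymm]
      have Tcb : T c b := by grind [hT.asymm]
      exact ⟨ht, a, by simp, c, by simp, b, by simp, hac, hbc.symm, hab, Tac, Tcb,
        hT.rel_of_not_rel hab Tab⟩

lemma inDeg_eq_card_filter [Fintype V] (v : V) [DecidablePred (T · v)] :
    inDeg T v = #{u | T u v} := by
  rw [inDeg, Set.ncard_eq_toFinset_card', Set.toFinset_ofPred]

variable [Fintype V]

open Classical in
lemma card_filter_isSink_eq_choose_inDeg (k : ℕ) {v : V} (hv : ¬ T v v) :
    #{t ∈ powersetCard (k + 1) univ | IsSink T t v} = (inDeg T v).choose k := by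
  rw [inDeg_eq_card_filter, ← card_powersetCard]
  have hvp : ∀ {p : Finset V}, p ⊆ ({u | T u v} : Finset V) → v ∉ p := fun hp hvp => by
    simpa [hv] using hp hvp
  refine card_nbij' (·.erase v) (insert v) ?_ ?_ ?_ ?_
  · intro t ht
    obtain ⟨htk, hvt, hsink⟩ : #t = k + 1 ∧ IsSink T t v := by simpa using ht
    refine mem_powersetCard.2 ⟨fun u hu => ?_, by simp [card_erase_of_mem hvt, htk]⟩
    obtain ⟨huv, hut⟩ := mem_erase.1 hu
    simpa using hsink u hut huv
  · intro p hp
    obtain ⟨hp, hpk⟩ := mem_powersetCard.1 hp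
    refine mem_filter.2 ⟨by simp [card_insert_of_notMem (hvp hp), hpk], mem_insert_self v p,
      fun u hu huv => ?_⟩
    simpa using hp ((mem_insert.1 hu).resolve_left huv)
  · intro t ht
    exact insert_erase (mem_filter.1 ht).2.1
  · intro p hp
    exact erase_insert (hvp (mem_powersetCard.1 hp).1)

open Classical in
lemma sum_choose_inDeg_eq_sum_card_isSink (hirr : ∀ v, ¬ T v v) (k : ℕ) :
    ∑ v, (inDeg T v).choose k = ∑ t ∈ powersetCard (k + 1) univ, #{v | IsSink T t v} := by
  simp_rw [← card_filter_isSink_eq_choose_inDeg k (hirr _)]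
  exact (sum_card_bipartiteAbove_eq_sum_card_bipartiteBelow (r := fun t v => IsSink T t v)).symm

open Classical in
lemma IsTournament.card_filter_isSink (hT : IsTournament T) (t : Finset V) :
    #{v | IsSink T t v} = if ∃ v, IsSink T t v then 1 else 0 := by
  split_ifs with h
  · obtain ⟨v, hv⟩ := h
    refine card_eq_one.2 ⟨v, ?_⟩
    ext w
    simpa using ⟨fun hw => hT.isSink_unique hw hv, fun h => h ▸ hv⟩
  · simpa using h

lemma IsTournament.sum_inDeg (hT : IsTournament T) :
    ∑ v, inDeg T v = (Fintype.card V).choose 2 := by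
  classical
  have h := sum_choose_inDeg_eq_sum_card_isSink hT.1 1
  simp only [Nat.choose_one_right, hT.card_filter_isSink] at h
  rw [h, sum_congr rfl fun t ht =>
      if_pos (hT.exists_isSink_of_card_eq_two (mem_powersetCard.1 ht).2),
    sum_const, smul_eq_mul, mul_one, card_powersetCard, card_univ]

lemma cyclicTriadCount_eq_card_filter [DecidablePred (CyclicTriad T)] :
    cyclicTriadCount T = #{t ∈ powersetCard 3 univ | CyclicTriad T t} := by
  rw [cyclicTriadCount, Set.ncard_eq_toFinset_card', Set.toFinset_ofPred]
  congr 1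
  ext t
  simpa using fun h : CyclicTriad T t => h.1

lemma IsTournament.cyclicTriadCount_add_sum_choose_inDeg (hT : IsTournament T) :
    cyclicTriadCount T + ∑ v, (inDeg T v).choose 2 = (Fintype.card V).choose 3 := by
  classical
  rw [sum_choose_inDeg_eq_sum_card_isSink hT.1, cyclicTriadCount_eq_card_filter]
  simp_rw [hT.card_filter_isSink]
  rw [sum_congr rfl fun t ht =>
      if_congr (hT.exists_isSink_iff_not_cyclicTriad (mem_powersetCard.1 ht).2) rfl rfl,
    ← card_filter, card_filter_add_card_filter_not, card_powersetCard, card_univ]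

end Sinks

section ChooseTwo

variable {ι : Type*} (s : Finset ι) (d : ι → ℕ) {r : ℕ}

lemma sum_choose_two_sub_card_mul_choose_two (h : ∑ i ∈ s, d i = #s * r) :
    ((∑ i ∈ s, (d i).choose 2 : ℕ) : ℚ) - (#s * r.choose 2 : ℕ) =
      (∑ i ∈ s, ((d i : ℚ) - r) ^ 2) / 2 := by
  have hq : ∑ i ∈ s, (d i : ℚ) = #s * r := by exact_mod_cast h
  have hsq : ∀ i, ((d i : ℚ) - r) ^ 2 =
      2 * ((d i : ℚ) * (d i - 1) / 2) - (2 * r - 1) * d i + r ^ 2 := fun i => by ring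
  push_cast [Nat.cast_choose_two]
  simp_rw [hsq]
  rw [sum_add_distrib, sum_sub_distrib, ← mul_sum, ← mul_sum, hq, sum_const, nsmul_eq_mul]
  ring

lemma card_mul_choose_two_le_sum_choose_two (h : ∑ i ∈ s, d i = #s * r) :
    #s * r.choose 2 ≤ ∑ i ∈ s, (d i).choose 2 := by
  have hgap := sum_choose_two_sub_card_mul_choose_two s d h
  have hnonneg : 0 ≤ ∑ i ∈ s, ((d i : ℚ) - r) ^ 2 := sum_nonneg fun i _ => sq_nonneg _
  have hq : ((#s * r.choose 2 : ℕ) : ℚ) ≤ (∑ i ∈ s, (d i).choose 2 : ℕ) := by linarith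
  exact_mod_cast hq

lemma sum_choose_two_eq_card_mul_iff (h : ∑ i ∈ s, d i = #s * r) :
    ∑ i ∈ s, (d i).choose 2 = #s * r.choose 2 ↔ ∀ i ∈ s, d i = r := by
  have hgap := sum_choose_two_sub_card_mul_choose_two s d h
  rw [← Nat.cast_inj (R := ℚ), ← sub_eq_zero, hgap, div_eq_zero_iff, or_iff_left two_ne_zero,
    sum_eq_zero_iff_of_nonneg fun i _ => sq_nonneg _]
  simp [sub_eq_zero]

end ChooseTwo

def rotationalTournament (r : ℕ) (u v : Fin (2 * r + 1)) : Prop :=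
  0 < (v - u).val ∧ (v - u).val ≤ r

lemma isTournament_rotationalTournament (r : ℕ) : IsTournament (rotationalTournament r) := by
  refine ⟨fun v => by simp [rotationalTournament], fun u v huv => ?_⟩
  have hw : (v - u).val ≠ 0 := Fin.val_ne_iff.2 (sub_ne_zero.2 huv.symm)
  have hneg : (u - v).val = 2 * r + 1 - (v - u).val := by
    rw [← neg_sub, Fin.val_neg', Nat.mod_eq_of_lt (by omega)]
  simp only [rotationalTournament, hneg]
  omega

lemma inDeg_rotationalTournament (r : ℕ) (v : Fin (2 * r + 1)) :
    inDeg (rotationalTournament r) v = r := by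
  classical
  rw [inDeg_eq_card_filter]
  calc #{u | rotationalTournament r u v} = #{w : Fin (2 * r + 1) | 0 < w.val ∧ w.val ≤ r} :=
        card_nbij' (v - ·) (v - ·) (fun u hu => by simpa [rotationalTournament] using hu)
          (fun w hw => by simpa [rotationalTournament] using hw)
          (fun u _ => sub_sub_cancel v u) (fun w _ => sub_sub_cancel v w)
    _ = #(Ioc (0 : Fin (2 * r + 1)) ⟨r, by omega⟩) := by
        congr 1
        ext w
        simp [Fin.pos_iff_ne_zero', Fin.le_def]
    _ = r := by simp

section OddOrder

variable {V : Type*} [Fintype V] {T : V → V → Prop} {r : ℕ}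

lemma IsTournament.sum_inDeg_of_card_eq (hT : IsTournament T)
    (hV : Fintype.card V = 2 * r + 1) : ∑ v, inDeg T v = Fintype.card V * r := by
  rw [hT.sum_inDeg, hV, Nat.choose_two_right, Nat.add_sub_cancel, mul_left_comm,
    Nat.mul_div_cancel_left _ two_pos]

lemma IsTournament.cyclicTriadCount_add_le (hT : IsTournament T)
    (hV : Fintype.card V = 2 * r + 1) :
    cyclicTriadCount T + Fintype.card V * r.choose 2 ≤ (Fintype.card V).choose 3 := by
  rw [← hT.cyclicTriadCount_add_sum_choose_inDeg, ← card_univ]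
  gcongr
  exact card_mul_choose_two_le_sum_choose_two _ _ (by simpa using hT.sum_inDeg_of_card_eq hV)

lemma IsTournament.cyclicTriadCount_add_eq_iff (hT : IsTournament T)
    (hV : Fintype.card V = 2 * r + 1) :
    cyclicTriadCount T + Fintype.card V * r.choose 2 = (Fintype.card V).choose 3 ↔
      ∀ v, inDeg T v = r := by
  rw [← hT.cyclicTriadCount_add_sum_choose_inDeg, ← card_univ, add_right_inj, eq_comm,
    sum_choose_two_eq_card_mul_iff _ _ (by simpa using hT.sum_inDeg_of_card_eq hV)]
  simp

end OddOrder

theorem max_cyclic_iff_regular_odd (r n : ℕ) (hn : n = 2 * r + 1)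
    (T : Fin n → Fin n → Prop) (hT : IsTournament T) :
    (∀ T' : Fin n → Fin n → Prop, IsTournament T' →
        cyclicTriadCount T' ≤ cyclicTriadCount T) ↔
      (∀ v : Fin n, inDeg T v = r) := by
  subst hn
  have hV : Fintype.card (Fin (2 * r + 1)) = 2 * r + 1 := Fintype.card_fin _
  have hR := isTournament_rotationalTournament r
  rw [← hT.cyclicTriadCount_add_eq_iff hV]
  constructor
  · intro hmax
    refine le_antisymm (hT.cyclicTriadCount_add_le hV) ?_
    rw [← (hR.cyclicTriadCount_add_eq_iff hV).2 (inDeg_rotationalTournament r)]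
    exact Nat.add_le_add_right (hmax _ hR) _
  · intro heq T' hT'
    have := hT'.cyclicTriadCount_add_le hV
    omega
end

section
/- A tournament on n = 2r vertices (r ≥ 1) has the maximal possible number of cyclic triads if and only if exactly r vertices have in-degree r and exactly r vertices have in-degree r-1. -/
open Finset Classical

variable {n : ℕ}

lemma inDeg_eq (T : Fin n → Fin n → Prop) (v : Fin n) :
    inDeg T v = (univ.filter (fun u => T u v)).card := by
  classical
  rw [inDeg, Set.ncard_eq_toFinset_card']
  congr 1
  ext u
  simp

lemma count_eq (T : Fin n → Fin n → Prop) :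
    cyclicTriadCount T = (univ.filter (fun t : Finset (Fin n) => CyclicTriad T t)).card := by
  classical
  rw [cyclicTriadCount, Set.ncard_eq_toFinset_card']
  congr 1
  ext t
  simp

lemma tour_total {T : Fin n → Fin n → Prop} (hT : IsTournament T) {u v : Fin n}
    (h : u ≠ v) : T u v ∨ T v u := by
  by_cases h1 : T u v
  · exact Or.inl h1
  · exact Or.inr ((hT.2 v u h.symm).mpr h1)

lemma tour_asymm {T : Fin n → Fin n → Prop} (hT : IsTournament T) {u v : Fin n}
    (h : T u v) : ¬ T v u := by
  rcases eq_or_ne v u with rfl | hne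
  · exact fun _ => hT.1 v h
  · exact fun hvu => (hT.2 v u hne).mp hvu h

lemma sink3 {T : Fin n → Fin n → Prop} {a b c v : Fin n}
    (ha : a = v ∨ T a v) (hb : b = v ∨ T b v) (hc : c = v ∨ T c v) :
    ∀ u ∈ ({a, b, c} : Finset (Fin n)), u ≠ v → T u v := by
  intro u hu hne
  simp at hu
  rcases hu with rfl | rfl | rfl <;> tauto

lemma exists_sink {T : Fin n → Fin n → Prop} (hT : IsTournament T) {t : Finset (Fin n)}
    (h3 : t.card = 3) (hnc : ¬ CyclicTriad T t) :
    ∃ v ∈ t, ∀ u ∈ t, u ≠ v → T u v := by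
  obtain ⟨a, b, c, hab, hac, hbc, rfl⟩ := Finset.card_eq_three.mp h3
  rcases tour_total hT hab with h1 | h1 <;> rcases tour_total hT hbc with h2 | h2 <;>
    rcases tour_total hT hac with h4 | h4
  · exact ⟨c, by simp, sink3 (Or.inr h4) (Or.inr h2) (Or.inl rfl)⟩
  · exact absurd ⟨h3, a, by simp, b, by simp, c, by simp, hab, hbc, hac, h1, h2, h4⟩ hnc
  · exact ⟨b, by simp, sink3 (Or.inr h1) (Or.inl rfl) (Or.inr h2)⟩
  · exact ⟨b, by simp, sink3 (Or.inr h1) (Or.inl rfl) (Or.inr h2)⟩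
  · exact ⟨c, by simp, sink3 (Or.inr h4) (Or.inr h2) (Or.inl rfl)⟩
  · exact ⟨a, by simp, sink3 (Or.inl rfl) (Or.inr h1) (Or.inr h4)⟩
  · exact absurd ⟨h3, a, by simp, c, by simp, b, by simp, hac, hbc.symm, hab, h4, h2, h1⟩ hnc
  · exact ⟨a, by simp, sink3 (Or.inl rfl) (Or.inr h1) (Or.inr h4)⟩

lemma sink_unique {T : Fin n → Fin n → Prop} (hT : IsTournament T) {t : Finset (Fin n)}
    {v w : Fin n} (hv : v ∈ t) (hsv : ∀ u ∈ t, u ≠ v → T u v)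
    (hw : w ∈ t) (hsw : ∀ u ∈ t, u ≠ w → T u w) : v = w := by
  by_contra hne
  exact tour_asymm hT (hsv w hw (Ne.symm hne)) (hsw v hv hne)

lemma no_sink_of_cyclic {T : Fin n → Fin n → Prop} (hT : IsTournament T) {t : Finset (Fin n)}
    (hc : CyclicTriad T t) {v : Fin n} (hv : v ∈ t)
    (hs : ∀ u ∈ t, u ≠ v → T u v) : False := by
  obtain ⟨h3, a, ha, b, hb, c, hc', hab, hbc, hac, r1, r2, r3⟩ := hc
  have hsub : ({a, b, c} : Finset (Fin n)) ⊆ t := by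
    intro x hx; simp at hx; rcases hx with rfl|rfl|rfl <;> assumption
  have hcard : ({a, b, c} : Finset (Fin n)).card = 3 := by
    rw [Finset.card_insert_of_notMem (by simp [hab, hac]),
      Finset.card_insert_of_notMem (by simp [hbc])]
    simp
  have heq : ({a, b, c} : Finset (Fin n)) = t :=
    Finset.eq_of_subset_of_card_le hsub (by omega)
  have hvm : v ∈ ({a, b, c} : Finset (Fin n)) := heq ▸ hv
  simp at hvm
  rcases hvm with rfl|rfl|rfl
  · exact tour_asymm hT r1 (hs b hb hab.symm)
  · exact tour_asymm hT r2 (hs c hc' hbc.symm)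
  · exact tour_asymm hT r3 (hs a ha hac)

open Classical in
lemma count_formula {T : Fin n → Fin n → Prop} (hT : IsTournament T) :
    cyclicTriadCount T + ∑ v : Fin n, Nat.choose (inDeg T v) 2 = Nat.choose n 3 := by
  classical
  have hsum : ∑ v : Fin n, Nat.choose (inDeg T v) 2
      = ((univ : Finset (Fin n)).sigma
          (fun v : Fin n => ((univ.filter (fun u => T u v)).powersetCard 2))).card := by
    rw [Finset.card_sigma]
    refine Finset.sum_congr rfl fun v _ => ?_
    rw [Finset.card_powersetCard, inDeg_eq]
  have hbij : ((univ : Finset (Fin n)).sigma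
        (fun v : Fin n => ((univ.filter (fun u => T u v)).powersetCard 2))).card
      = ((univ.powersetCard 3).filter (fun t : Finset (Fin n) => ¬ CyclicTriad T t)).card := by
    apply Finset.card_bij (fun x _ => insert x.1 x.2)
    · rintro ⟨v, p⟩ hx
      simp only [Finset.mem_sigma, Finset.mem_powersetCard] at hx
      obtain ⟨-, hp, hp2⟩ := hx
      have hvp : v ∉ p := fun hvpm => hT.1 v ((Finset.mem_filter.mp (hp hvpm)).2)
      have hbeats : ∀ u ∈ p, T u v := fun u hu => (Finset.mem_filter.mp (hp hu)).2
      have hcard : (insert v p).card = 3 := by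
        rw [Finset.card_insert_of_notMem hvp, hp2]
      simp only [Finset.mem_filter, Finset.mem_powersetCard]
      refine ⟨⟨Finset.subset_univ _, hcard⟩, fun hcyc => ?_⟩
      refine no_sink_of_cyclic hT hcyc (Finset.mem_insert_self v p) ?_
      intro u hu hne
      rcases Finset.mem_insert.mp hu with rfl | hu'
      · exact absurd rfl hne
      · exact hbeats u hu'
    · rintro ⟨v, p⟩ hx ⟨w, q⟩ hy heq
      simp only [Finset.mem_sigma, Finset.mem_powersetCard] at hx hy
      obtain ⟨-, hp, hp2⟩ := hx
      obtain ⟨-, hq, hq2⟩ := hy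
      have hvp : v ∉ p := fun hvpm => hT.1 v ((Finset.mem_filter.mp (hp hvpm)).2)
      have hwq : w ∉ q := fun hm => hT.1 w ((Finset.mem_filter.mp (hq hm)).2)
      have hsv : ∀ u ∈ insert v p, u ≠ v → T u v := by
        intro u hu hne
        rcases Finset.mem_insert.mp hu with rfl | hu'
        · exact absurd rfl hne
        · exact (Finset.mem_filter.mp (hp hu')).2
      have hsw : ∀ u ∈ insert v p, u ≠ w → T u w := by
        rw [heq]
        intro u hu hne
        rcases Finset.mem_insert.mp hu with rfl | hu'
        · exact absurd rfl hne
        · exact (Finset.mem_filter.mp (hq hu')).2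
      have hvw : v = w := sink_unique hT (Finset.mem_insert_self v p) hsv
        (heq ▸ Finset.mem_insert_self w q) hsw
      subst hvw
      have hpq : p = q := by
        have h1 : (insert v p).erase v = p := Finset.erase_insert hvp
        have h2 : (insert v q).erase v = q := Finset.erase_insert hwq
        rw [← h1, heq, h2]
      simp [hpq]
    · intro t ht
      simp only [Finset.mem_filter, Finset.mem_powersetCard] at ht
      obtain ⟨⟨-, h3⟩, hnc⟩ := ht
      obtain ⟨v, hv, hs⟩ := exists_sink hT h3 hnc
      refine ⟨⟨v, t.erase v⟩, ?_, Finset.insert_erase hv⟩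
      simp only [Finset.mem_sigma, Finset.mem_powersetCard]
      refine ⟨Finset.mem_univ v, fun u hu => ?_, ?_⟩
      · have := Finset.mem_erase.mp hu
        exact Finset.mem_filter.mpr ⟨Finset.mem_univ u, hs u this.2 this.1⟩
      · rw [Finset.card_erase_of_mem hv, h3]
  have hcyc : cyclicTriadCount T
      = ((univ.powersetCard 3).filter (fun t : Finset (Fin n) => CyclicTriad T t)).card := by
    rw [count_eq]
    congr 1
    ext t
    simp only [Finset.mem_filter, Finset.mem_univ, true_and, Finset.mem_powersetCard]
    exact ⟨fun h => ⟨⟨Finset.subset_univ _, h.1⟩, h⟩, fun h => h.2⟩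
  rw [hcyc, hsum, hbij, Finset.card_filter_add_card_filter_not,
    Finset.card_powersetCard, Finset.card_univ, Fintype.card_fin]

lemma sum_inDeg {T : Fin n → Fin n → Prop} (hT : IsTournament T) :
    2 * ∑ v : Fin n, inDeg T v = n * (n - 1) := by
  classical
  have h1 : ∀ v : Fin n, (univ.filter (fun u => T u v)).card
      + (univ.filter (fun u => T v u)).card = n - 1 := by
    intro v
    have hdisj : Disjoint (univ.filter (fun u => T u v)) (univ.filter (fun u => T v u)) := by
      rw [Finset.disjoint_left]
      intro u hu hv
      simp only [Finset.mem_filter] at hu hv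
      exact tour_asymm hT hu.2 hv.2
    rw [← Finset.card_union_of_disjoint hdisj]
    have : (univ.filter (fun u => T u v)) ∪ (univ.filter (fun u => T v u))
        = univ.erase v := by
      ext u
      simp only [Finset.mem_union, Finset.mem_filter, Finset.mem_univ, true_and,
        Finset.mem_erase]
      constructor
      · rintro (h | h)
        · exact ⟨fun he => hT.1 v (he ▸ h), trivial⟩
        · exact ⟨fun he => hT.1 v (he ▸ h), trivial⟩
      · rintro ⟨hne, -⟩
        exact tour_total hT hne
    rw [this, Finset.card_erase_of_mem (Finset.mem_univ v), Finset.card_univ,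
      Fintype.card_fin]
  have h2 : ∑ v : Fin n, (univ.filter (fun u => T u v)).card
      = ∑ v : Fin n, (univ.filter (fun u => T v u)).card := by
    simp_rw [Finset.card_filter]
    rw [Finset.sum_comm]
  have h3 : ∑ v : Fin n, inDeg T v = ∑ v : Fin n, (univ.filter (fun u => T u v)).card := by
    exact Finset.sum_congr rfl fun v _ => inDeg_eq T v
  rw [h3, two_mul]
  nth_rewrite 2 [h2]
  rw [← Finset.sum_add_distrib]
  rw [Finset.sum_congr rfl fun v _ => h1 v, Finset.sum_const, Finset.card_univ,
    Fintype.card_fin, smul_eq_mul]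

lemma two_choose_two (d : ℕ) : 2 * Nat.choose d 2 = d * (d - 1) := by
  induction d with
  | zero => simp
  | succ m ih =>
    rw [Nat.choose_succ_succ, Nat.choose_one_right, Nat.mul_add, ih, Nat.succ_sub_one]
    rcases m with _ | k
    · simp
    · rw [Nat.succ_sub_one]
      ring

lemma two_choose_two_int (d : ℕ) : (2 * Nat.choose d 2 : ℤ) = (d : ℤ) * ((d : ℤ) - 1) := by
  rcases d with _ | m
  · simp
  · have h := two_choose_two (m + 1)
    rw [Nat.succ_sub_one] at h
    have h' : (2 : ℤ) * ((m + 1).choose 2 : ℤ) = ((m : ℤ) + 1) * m := by exact_mod_cast h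
    push_cast
    linear_combination h' 

lemma opt_lemma (r : ℕ) (hr : 1 ≤ r) (d : Fin (2 * r) → ℕ)
    (hsum : ∑ v, d v = r * (2 * r - 1)) :
    r * (r - 1) * (r - 1) ≤ ∑ v, Nat.choose (d v) 2 ∧
      (∑ v, Nat.choose (d v) 2 = r * (r - 1) * (r - 1) → ∀ v, d v = r ∨ d v = r - 1) := by
  have hg : ∀ v : Fin (2 * r), (0 : ℤ) ≤ ((d v : ℤ) - r) * ((d v : ℤ) - r + 1) := by
    intro v
    rcases le_or_gt (r : ℤ) (d v : ℤ) with h | h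
    · exact mul_nonneg (by omega) (by omega)
    · have h2 : (0 : ℤ) ≤ ((r : ℤ) - d v) * ((r : ℤ) - d v - 1) :=
        mul_nonneg (by omega) (by omega)
      have h3 : ((d v : ℤ) - r) * ((d v : ℤ) - r + 1)
          = ((r : ℤ) - d v) * ((r : ℤ) - d v - 1) := by ring
      rw [h3]
      exact h2
  have hsumg : ∑ v : Fin (2 * r), ((d v : ℤ) - r) * ((d v : ℤ) - r + 1)
      = 2 * (∑ v, Nat.choose (d v) 2 : ℕ) - 2 * (r * (r - 1) * (r - 1) : ℕ) := by
    have h1 : ∀ v : Fin (2 * r), ((d v : ℤ) - r) * ((d v : ℤ) - r + 1)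
        = 2 * (Nat.choose (d v) 2 : ℤ) - 2 * ((r : ℤ) - 1) * (d v : ℤ)
          + (r : ℤ) * ((r : ℤ) - 1) := by
      intro v
      have := two_choose_two_int (d v)
      push_cast at this ⊢
      rw [show ((2 : ℤ) * (Nat.choose (d v) 2 : ℤ)) = (d v : ℤ) * ((d v : ℤ) - 1) from this]
      ring
    rw [Finset.sum_congr rfl fun v _ => h1 v]
    rw [Finset.sum_add_distrib, Finset.sum_sub_distrib, ← Finset.mul_sum, ← Finset.mul_sum,
      Finset.sum_const, Finset.card_univ, Fintype.card_fin, nsmul_eq_mul]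
    have hc1 : (∑ x : Fin (2 * r), ((d x : ℤ))) = (r : ℤ) * (2 * (r : ℤ) - 1) := by
      rw [← Nat.cast_sum, hsum]
      push_cast [Nat.cast_sub (show 1 ≤ 2 * r by omega)]
      ring
    rw [hc1]
    push_cast [Nat.cast_sub hr]
    ring
  have htot : (0 : ℤ) ≤ 2 * (∑ v, Nat.choose (d v) 2 : ℕ) - 2 * (r * (r - 1) * (r - 1) : ℕ) := by
    rw [← hsumg]
    exact Finset.sum_nonneg fun v _ => hg v
  constructor
  · omega
  · intro heq v
    have hzero : ∀ v ∈ Finset.univ, ((d v : ℤ) - r) * ((d v : ℤ) - r + 1) = 0 := by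
      rw [← Finset.sum_eq_zero_iff_of_nonneg fun v _ => hg v]
      rw [hsumg, heq]
      ring
    have := mul_eq_zero.mp (hzero v (Finset.mem_univ v))
    omega

lemma card_filter_val {N : ℕ} (p : ℕ → Prop) [DecidablePred p] :
    ((univ : Finset (Fin N)).filter (fun i => p i.val)).card
      = ((Finset.range N).filter p).card := by
  apply Finset.card_nbij (fun i => i.val)
  · intro a ha
    simp only [Finset.mem_coe, Finset.mem_filter, Finset.mem_univ, true_and] at ha
    simp [a.isLt, ha]
  · intro x _ y _ h
    exact Fin.val_injective h
  · intro m hm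
    simp only [Finset.mem_coe, Finset.mem_filter, Finset.mem_range] at hm
    exact ⟨⟨m, hm.1⟩, by simp [hm.2], rfl⟩

lemma exists_balanced (r : ℕ) (hr : 1 ≤ r) :
    ∃ T0 : Fin (2 * r) → Fin (2 * r) → Prop, IsTournament T0 ∧
      ∀ v : Fin (2 * r), inDeg T0 v = if r ≤ v.val then r else r - 1 := by
  classical
  refine ⟨fun i j => (i.val < j.val ∧ j.val - i.val ≤ r) ∨ (j.val < i.val ∧ r < i.val - j.val),
    ⟨?_, ?_⟩, ?_⟩
  · intro v
    omega
  · intro u v huv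
    have : u.val ≠ v.val := fun h => huv (Fin.ext h)
    constructor
    · intro h1 h2
      omega
    · intro h1
      omega
  · intro v
    rw [inDeg_eq]
    have hcv : (univ.filter (fun i : Fin (2 * r) =>
          (i.val < v.val ∧ v.val - i.val ≤ r) ∨ (v.val < i.val ∧ r < i.val - v.val))).card
        = ((Finset.range (2 * r)).filter (fun a =>
          (a < v.val ∧ v.val - a ≤ r) ∨ (v.val < a ∧ r < a - v.val))).card :=
      card_filter_val (fun a => (a < v.val ∧ v.val - a ≤ r) ∨ (v.val < a ∧ r < a - v.val))
    rw [Finset.filter_congr_decidable, hcv]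
    have hv2 : v.val < 2 * r := v.isLt
    rcases le_or_gt r v.val with hb | hb
    · have heq : ((Finset.range (2 * r)).filter (fun a =>
          (a < v.val ∧ v.val - a ≤ r) ∨ (v.val < a ∧ r < a - v.val)))
          = Finset.Ico (v.val - r) v.val := by
        ext x
        simp only [Finset.mem_filter, Finset.mem_range, Finset.mem_Ico]
        omega
      rw [heq, Nat.card_Ico, if_pos hb]
      omega
    · have heq : ((Finset.range (2 * r)).filter (fun a =>
          (a < v.val ∧ v.val - a ≤ r) ∨ (v.val < a ∧ r < a - v.val)))
          = Finset.Ico 0 v.val ∪ Finset.Ico (v.val + r + 1) (2 * r) := by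
        ext x
        simp only [Finset.mem_filter, Finset.mem_range, Finset.mem_union, Finset.mem_Ico]
        omega
      rw [heq, Finset.card_union_of_disjoint (by
        rw [Finset.disjoint_left]
        intro x hx hy
        simp only [Finset.mem_Ico] at hx hy
        omega), Nat.card_Ico, Nat.card_Ico, if_neg (by omega)]
      omega

lemma ncard_filter {α : Type*} [Fintype α] (P : α → Prop) [DecidablePred P] :
    {v | P v}.ncard = (Finset.univ.filter P).card := by
  rw [Set.ncard_eq_toFinset_card']
  congr 1
  ext u
  simp

lemma arith1 (r : ℕ) (hr : 1 ≤ r) :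
    r * Nat.choose r 2 + r * Nat.choose (r - 1) 2 = r * (r - 1) * (r - 1) := by
  have h1 := two_choose_two r
  have h2 := two_choose_two (r - 1)
  apply Nat.eq_of_mul_eq_mul_left (show 0 < 2 by norm_num)
  have e : 2 * (r * Nat.choose r 2 + r * Nat.choose (r - 1) 2)
      = r * (2 * Nat.choose r 2) + r * (2 * Nat.choose (r - 1) 2) := by ring
  rw [e, h1, h2]
  rcases r with _ | m
  · simp
  · simp only [Nat.succ_sub_one]
    rcases m with _ | k
    · simp
    · simp only [Nat.succ_sub_one]
      ring

lemma sum_choose_balanced {N : ℕ} (r : ℕ) (hr : 1 ≤ r) (d : Fin N → ℕ)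
    (hd : ∀ v, d v = r ∨ d v = r - 1)
    (hA : (univ.filter (fun v : Fin N => d v = r)).card = r)
    (hB : (univ.filter (fun v : Fin N => d v = r - 1)).card = r) :
    ∑ v, Nat.choose (d v) 2 = r * (r - 1) * (r - 1) := by
  classical
  rw [← Finset.sum_filter_add_sum_filter_not univ (fun v => d v = r)]
  have hA' : ∑ v ∈ univ.filter (fun v : Fin N => d v = r), Nat.choose (d v) 2
      = r * Nat.choose r 2 := by
    rw [Finset.sum_congr rfl (fun v hv => by rw [(Finset.mem_filter.mp hv).2]),
      Finset.sum_const, hA, smul_eq_mul]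
  have hBeq : univ.filter (fun v : Fin N => ¬ d v = r)
      = univ.filter (fun v : Fin N => d v = r - 1) := by
    apply Finset.filter_congr
    intro v _
    rcases hd v with h | h <;> rw [h] <;> omega
  have hB' : ∑ v ∈ univ.filter (fun v : Fin N => ¬ d v = r), Nat.choose (d v) 2
      = r * Nat.choose (r - 1) 2 := by
    rw [hBeq, Finset.sum_congr rfl (fun v hv => by rw [(Finset.mem_filter.mp hv).2]),
      Finset.sum_const, hB, smul_eq_mul]
  rw [hA', hB', arith1 r hr]

lemma card_filter_ge (r : ℕ) (hr : 1 ≤ r) :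
    ((univ : Finset (Fin (2 * r))).filter (fun v => r ≤ v.val)).card = r := by
  rw [card_filter_val (fun a => r ≤ a)]
  rw [show (Finset.range (2 * r)).filter (fun a => r ≤ a) = Finset.Ico r (2 * r) by
    ext x
    simp only [Finset.mem_filter, Finset.mem_range, Finset.mem_Ico]
    omega]
  rw [Nat.card_Ico]
  omega

theorem max_cyclic_iff_regular_even (r n : ℕ) (hr : 1 ≤ r) (hn : n = 2 * r)
    (T : Fin n → Fin n → Prop) (hT : IsTournament T) :
    (∀ T' : Fin n → Fin n → Prop, IsTournament T' →
        cyclicTriadCount T' ≤ cyclicTriadCount T) ↔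
      ({v : Fin n | inDeg T v = r}.ncard = r ∧
        {v : Fin n | inDeg T v = r - 1}.ncard = r) := by
  subst hn
  classical
  -- sum of indegrees of any tournament
  have hsumdeg : ∀ (T' : Fin (2 * r) → Fin (2 * r) → Prop), IsTournament T' →
      ∑ v, inDeg T' v = r * (2 * r - 1) := by
    intro T' hT'
    have h := sum_inDeg hT'
    have h2 : 2 * (r * (2 * r - 1)) = 2 * r * (2 * r - 1) := by ring
    have h3 : 2 * ∑ v, inDeg T' v = 2 * (r * (2 * r - 1)) := by rw [h, ← h2]
    exact Nat.eq_of_mul_eq_mul_left (by norm_num) h3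
  have hge : ∀ (T' : Fin (2 * r) → Fin (2 * r) → Prop), IsTournament T' →
      r * (r - 1) * (r - 1) ≤ ∑ v, Nat.choose (inDeg T' v) 2 :=
    fun T' hT' => (opt_lemma r hr _ (hsumdeg T' hT')).1
  obtain ⟨T0, hT0, hdeg0⟩ := exists_balanced r hr
  -- degrees of T0
  have hA0 : ((univ : Finset (Fin (2 * r))).filter (fun v => inDeg T0 v = r)).card = r := by
    rw [show (univ : Finset (Fin (2 * r))).filter (fun v => inDeg T0 v = r)
        = univ.filter (fun v : Fin (2 * r) => r ≤ v.val) by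
      apply Finset.filter_congr
      intro v _
      rw [hdeg0 v]
      rcases le_or_gt r v.val with h | h
      · simp [h]
      · simp only [if_neg (not_le.mpr h)]
        constructor
        · omega
        · omega]
    exact card_filter_ge r hr
  have hB0 : ((univ : Finset (Fin (2 * r))).filter (fun v => inDeg T0 v = r - 1)).card = r := by
    rw [show (univ : Finset (Fin (2 * r))).filter (fun v => inDeg T0 v = r - 1)
        = univ.filter (fun v : Fin (2 * r) => ¬ r ≤ v.val) by
      apply Finset.filter_congr
      intro v _
      rw [hdeg0 v]
      rcases le_or_gt r v.val with h | h
      · simp only [if_pos h]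
        constructor
        · omega
        · omega
      · simp [h]]
    rw [Finset.filter_not, Finset.card_sdiff_of_subset (Finset.filter_subset _ _), Finset.card_univ,
      Fintype.card_fin, card_filter_ge r hr]
    omega
  have hd0 : ∀ v, inDeg T0 v = r ∨ inDeg T0 v = r - 1 := by
    intro v
    rw [hdeg0 v]
    rcases le_or_gt r v.val with h | h
    · simp [h]
    · simp [not_le.mpr h]
  have hS0 : ∑ v, Nat.choose (inDeg T0 v) 2 = r * (r - 1) * (r - 1) :=
    sum_choose_balanced r hr _ hd0 hA0 hB0
  have hncA : {v : Fin (2 * r) | inDeg T v = r}.ncard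
      = (univ.filter (fun v => inDeg T v = r)).card := ncard_filter _
  have hncB : {v : Fin (2 * r) | inDeg T v = r - 1}.ncard
      = (univ.filter (fun v => inDeg T v = r - 1)).card := ncard_filter _
  have hdisj : Disjoint ((univ : Finset (Fin (2 * r))).filter (fun v => inDeg T v = r))
      (univ.filter (fun v => inDeg T v = r - 1)) := by
    rw [Finset.disjoint_left]
    intro v hv hw
    simp only [Finset.mem_filter] at hv hw
    omega
  constructor
  · intro hmax
    have h1 := hmax T0 hT0
    have hfT := count_formula hT
    have hfT0 := count_formula hT0
    have heq : ∑ v, Nat.choose (inDeg T v) 2 = r * (r - 1) * (r - 1) := by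
      have hle : ∑ v, Nat.choose (inDeg T v) 2 ≤ r * (r - 1) * (r - 1) := by
        linarith [hS0]
      exact le_antisymm hle (hge T hT)
    have hdeg := (opt_lemma r hr (inDeg T) (hsumdeg T hT)).2 heq
    have hunion : (univ.filter (fun v => inDeg T v = r))
        ∪ (univ.filter (fun v => inDeg T v = r - 1)) = (univ : Finset (Fin (2 * r))) := by
      apply Finset.eq_univ_of_forall
      intro v
      simp only [Finset.mem_union, Finset.mem_filter, Finset.mem_univ, true_and]
      exact hdeg v
    have hcard : (univ.filter (fun v => inDeg T v = r)).card
        + (univ.filter (fun v => inDeg T v = r - 1)).card = 2 * r := by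
      rw [← Finset.card_union_of_disjoint hdisj, hunion, Finset.card_univ, Fintype.card_fin]
    have hsplitsum : ∑ v, inDeg T v
        = (univ.filter (fun v => inDeg T v = r)).card * r
          + (univ.filter (fun v => inDeg T v = r - 1)).card * (r - 1) := by
      rw [← Finset.sum_filter_add_sum_filter_not univ (fun v => inDeg T v = r)]
      congr 1
      · rw [Finset.sum_congr rfl (fun v hv => (Finset.mem_filter.mp hv).2),
          Finset.sum_const, smul_eq_mul]
      · have hBeq : univ.filter (fun v : Fin (2 * r) => ¬ inDeg T v = r)
            = univ.filter (fun v => inDeg T v = r - 1) := by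
          apply Finset.filter_congr
          intro v _
          rcases hdeg v with h | h <;> rw [h] <;> omega
        rw [hBeq, Finset.sum_congr rfl (fun v hv => (Finset.mem_filter.mp hv).2),
          Finset.sum_const, smul_eq_mul]
    have hy : (univ.filter (fun v => inDeg T v = r - 1)).card = r := by
      have e1 : ((univ.filter (fun v => inDeg T v = r)).card : ℤ)
          + ((univ.filter (fun v => inDeg T v = r - 1)).card : ℤ) = 2 * r := by
        exact_mod_cast hcard
      have hsT := (hsplitsum.symm).trans (hsumdeg T hT)
      have e2 : ((univ.filter (fun v => inDeg T v = r)).card : ℤ) * r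
          + ((univ.filter (fun v => inDeg T v = r - 1)).card : ℤ) * ((r : ℤ) - 1)
          = (r : ℤ) * (2 * (r : ℤ) - 1) := by
        have e2' := congrArg (Nat.cast : ℕ → ℤ) hsT
        push_cast [Nat.cast_sub hr, Nat.cast_sub (show (1 : ℕ) ≤ 2 * r by omega)] at e2'
        linarith [e2']
      have : ((univ.filter (fun v => inDeg T v = r - 1)).card : ℤ) = r := by
        linear_combination (r : ℤ) * e1 - e2
      exact_mod_cast this
    have hx : (univ.filter (fun v => inDeg T v = r)).card = r := by omega
    exact ⟨by rw [hncA, hx], by rw [hncB, hy]⟩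
  · rintro ⟨hA, hB⟩ T' hT'
    rw [hncA] at hA
    rw [hncB] at hB
    have hunion : (univ.filter (fun v => inDeg T v = r))
        ∪ (univ.filter (fun v => inDeg T v = r - 1)) = (univ : Finset (Fin (2 * r))) := by
      apply Finset.eq_univ_of_card
      rw [Finset.card_union_of_disjoint hdisj, hA, hB, Fintype.card_fin]
      omega
    have hall : ∀ v, inDeg T v = r ∨ inDeg T v = r - 1 := by
      intro v
      have : v ∈ (univ.filter (fun v => inDeg T v = r))
          ∪ (univ.filter (fun v => inDeg T v = r - 1)) := by
        rw [hunion]; exact Finset.mem_univ v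
      simp only [Finset.mem_union, Finset.mem_filter, Finset.mem_univ, true_and] at this
      exact this
    have hST : ∑ v, Nat.choose (inDeg T v) 2 = r * (r - 1) * (r - 1) :=
      sum_choose_balanced r hr _ hall hA hB
    have hfT := count_formula hT
    have hfT' := count_formula hT'
    have := hge T' hT'
    linarith [hST]
end

section
/- Let nonnegative integers e_1, ..., e_n satisfy e_1 + ... + e_n = 2m, where e_i ≤ n-1 for all i. Then the sum over i of C(n - 1 - e_i, 2) is at least D(n,m) := (1/2)(n - floor(2m/n) - 2)(n^2 + n(floor(2m/n) - 1) - 4m). -/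
lemma int_mul_pred_nonneg (z : ℤ) : 0 ≤ z * (z - 1) := by
  rcases le_or_gt z 0 with h | h
  · exact mul_nonneg_of_nonpos_of_nonpos h (by linarith)
  · exact mul_nonneg (by linarith) (by omega)

lemma two_mul_choose_two_int (d : ℕ) : (2 * (d.choose 2) : ℤ) = (d : ℤ) * ((d : ℤ) - 1) := by
  cases d with
  | zero => simp
  | succ k =>
    have h2 : 2 ∣ (k + 1) * k := by
      rcases Nat.even_or_odd k with h | h
      · exact Dvd.dvd.mul_left h.two_dvd _
      · have he : Even (k + 1) := Odd.add_one h
        exact Dvd.dvd.mul_right he.two_dvd _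
    have h : 2 * ((k + 1).choose 2) = (k + 1) * k := by
      rw [Nat.choose_two_right]
      simpa [mul_comm] using Nat.div_mul_cancel h2
    have := congrArg (Nat.cast : ℕ → ℤ) h
    push_cast at this ⊢
    linarith

theorem sum_choose_undirected_lower_bound (n m : ℕ) (e : Fin n → ℕ)
    (hsum : ∑ i, e i = 2 * m) (hle : ∀ i, e i ≤ n - 1) :
    ((n : ℤ) - ((2 * m / n : ℕ) : ℤ) - 2) *
        ((n : ℤ) ^ 2 + (n : ℤ) * (((2 * m / n : ℕ) : ℤ) - 1) - 4 * (m : ℤ))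
      ≤ 2 * ∑ i, ((n - 1 - e i).choose 2 : ℤ) := by
  rcases Nat.eq_zero_or_pos n with hn | hn
  · subst hn
    have hm : m = 0 := by simpa using hsum.symm
    subst hm
    simp
  set Q : ℤ := ((2 * m / n : ℕ) : ℤ) with hQ
  set a : ℤ := (n : ℤ) - Q - 2 with ha
  have hx : ∀ i, ((n - 1 - e i : ℕ) : ℤ) = (n : ℤ) - 1 - (e i : ℤ) := by
    intro i
    have h1 := hle i
    omega
  have hcast : ((∑ i, e i : ℕ) : ℤ) = 2 * (m : ℤ) := by rw [hsum]; push_cast; ring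
  have hS : ∑ i, ((n - 1 - e i : ℕ) : ℤ) = (n : ℤ) * ((n : ℤ) - 1) - 2 * m := by
    rw [Finset.sum_congr rfl fun i _ => hx i, Finset.sum_sub_distrib,
      Finset.sum_const, Finset.card_univ, Fintype.card_fin]
    push_cast at hcast ⊢
    rw [hcast]
    ring
  have hterm : ∀ i ∈ Finset.univ, 2 * a * ((n - 1 - e i : ℕ) : ℤ) - a * (a + 1)
      ≤ 2 * ((n - 1 - e i).choose 2 : ℤ) := by
    intro i _
    have h2 := two_mul_choose_two_int (n - 1 - e i)
    set x : ℤ := ((n - 1 - e i : ℕ) : ℤ)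
    have key := int_mul_pred_nonneg (x - a)
    nlinarith [key, h2]
  calc ((n : ℤ) - Q - 2) * ((n : ℤ) ^ 2 + (n : ℤ) * (Q - 1) - 4 * (m : ℤ))
      = 2 * a * ((n : ℤ) * ((n : ℤ) - 1) - 2 * m) - (n : ℤ) * (a * (a + 1)) := by
        rw [ha]; ring
    _ = ∑ i : Fin n, (2 * a * ((n - 1 - e i : ℕ) : ℤ) - a * (a + 1)) := by
        rw [Finset.sum_sub_distrib, ← Finset.mul_sum, hS, Finset.sum_const,
          Finset.card_univ, Fintype.card_fin, nsmul_eq_mul]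
    _ ≤ ∑ i : Fin n, 2 * ((n - 1 - e i).choose 2 : ℤ) := Finset.sum_le_sum hterm
    _ = 2 * ∑ i, ((n - 1 - e i).choose 2 : ℤ) := (Finset.mul_sum _ _ _).symm
end

section
/- Let G be a generalized tournament graph on n vertices. Then (1/3) · sum over vertices c of C(deg_in(c) + deg_out(c), 2) ≤ |T_2| + |T_3|, where T_i is the set of triads covered by exactly i directed edges. -/
/-- Number of directed edges incident to a vertex. -/
noncomputable def degDir {V : Type*} (d : V → V → Prop) (c : V) : ℕ :=
  {b : V | d b c ∨ d c b}.ncard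

/-- Number of directed edges covering a triad `t`. -/
noncomputable def covCount {V : Type*} (d : V → V → Prop) (t : Finset V) : ℕ :=
  {p : V × V | p.1 ∈ t ∧ p.2 ∈ t ∧ d p.1 p.2}.ncard

/-!
Double counting of cherries: a cherry is a vertex `c` together with two directed edges at `c`,
so there are `∑ c, C(deg c, 2)` of them. The three vertices of a cherry form a triad covered by
at least two directed edges (the two edges of the cherry), and a triad arises from at most three
cherries, one for each choice of the centre `c`. Since a pair of vertices carries at most one
directed edge, a triad is covered by at most three, so these triads are exactly those in
`T₂ ∪ T₃`.
-/

open Finset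

section
variable {V : Type*} {d : V → V → Prop}

open Classical in
noncomputable def dirNbhd [Fintype V] (d : V → V → Prop) (c : V) : Finset V :=
  {b | d b c ∨ d c b}

open Classical in
noncomputable def dirPairs (d : V → V → Prop) (t : Finset V) : Finset (V × V) :=
  {p ∈ t ×ˢ t | d p.1 p.2}

theorem mem_dirNbhd [Fintype V] {b c : V} : b ∈ dirNbhd d c ↔ d b c ∨ d c b := by
  simp [dirNbhd]

theorem mem_dirPairs {t : Finset V} {p : V × V} :
    p ∈ dirPairs d t ↔ p.1 ∈ t ∧ p.2 ∈ t ∧ d p.1 p.2 := by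
  simp [dirPairs, and_assoc]

theorem degDir_eq_card_dirNbhd [Fintype V] (c : V) : degDir d c = #(dirNbhd d c) := by
  rw [degDir, ← Set.ncard_coe_finset]
  congr 1
  ext b
  simp [mem_dirNbhd]

theorem covCount_eq_card_dirPairs (t : Finset V) : covCount d t = #(dirPairs d t) := by
  rw [covCount, ← Set.ncard_coe_finset]
  congr 1
  ext p
  simp [mem_dirPairs]

theorem notMem_dirNbhd_self [Fintype V] (hasym : ∀ x y : V, d x y → ¬ d y x) (c : V) :
    c ∉ dirNbhd d c := by
  have := hasym c c
  simp_all [mem_dirNbhd]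

theorem covCount_le_choose_two (hasym : ∀ x y : V, d x y → ¬ d y x) (t : Finset V) :
    covCount d t ≤ (#t).choose 2 := by
  classical
  set D := dirPairs d t
  have hdisj : Disjoint D (D.image Prod.swap) := by
    simp only [disjoint_left, mem_image, Prod.exists, Prod.swap_prod_mk, D, mem_dirPairs]
    rintro ⟨a, b⟩ ⟨-, -, hab⟩ ⟨b', a', ⟨-, -, hba⟩, rfl, rfl⟩
    exact hasym _ _ hab hba
  have hoff : ∀ p ∈ D, p ∈ t.offDiag ∧ p.swap ∈ t.offDiag := by
    rintro ⟨a, b⟩ hab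
    obtain ⟨ha, hb, hab⟩ := mem_dirPairs.1 hab
    have hne : a ≠ b := fun h => hasym a a (h ▸ hab) (h ▸ hab)
    simp [ha, hb, hne, hne.symm]
  have hsub : D ∪ D.image Prod.swap ⊆ t.offDiag :=
    union_subset (fun p hp => (hoff p hp).1) (image_subset_iff.2 fun p hp => (hoff p hp).2)
  have hcard : 2 * #D ≤ #t * #t - #t := by
    have := card_le_card hsub
    rwa [card_union_of_disjoint hdisj, card_image_of_injective _ Prod.swap_injective,
      offDiag_card, ← two_mul] at this
  rw [covCount_eq_card_dirPairs, Nat.choose_two_right, Nat.le_div_iff_mul_le two_pos,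
    Nat.mul_sub_one]
  linarith

theorem card_le_covCount_insert [Fintype V] [DecidableEq V] {c : V} {s : Finset V}
    (hs : s ⊆ dirNbhd d c) :
    #s ≤ covCount d (insert c s) := by
  classical
  rw [covCount_eq_card_dirPairs]
  refine card_le_card_of_injOn (fun b => if d b c then (b, c) else (c, b)) ?_ ?_
  · intro b hb
    have hbs : b ∈ insert c s := mem_insert_of_mem hb
    by_cases hbc : d b c
    · simp [mem_dirPairs, hbc, hbs]
    · simpa [mem_dirPairs, hbc, hbs] using (mem_dirNbhd.1 (hs hb)).resolve_left hbc
  · intro a _ b _ hab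
    by_cases ha : d a c <;> by_cases hb : d b c <;> simp_all

noncomputable def cherries [Fintype V] (d : V → V → Prop) : Finset (Σ _ : V, Finset V) :=
  univ.sigma fun c => (dirNbhd d c).powersetCard 2

open Classical in
noncomputable def triadsCovGeTwo [Fintype V] (d : V → V → Prop) : Finset (Finset V) :=
  {t | #t = 3 ∧ 2 ≤ covCount d t}

theorem card_cherries [Fintype V] : #(cherries d) = ∑ c, (degDir d c).choose 2 := by
  simp [cherries, card_powersetCard, degDir_eq_card_dirNbhd]

theorem insert_mem_triadsCovGeTwo [Fintype V] [DecidableEq V]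
    (hasym : ∀ x y : V, d x y → ¬ d y x) {x : Σ _ : V, Finset V} (hx : x ∈ cherries d) :
    insert x.1 x.2 ∈ triadsCovGeTwo d := by
  obtain ⟨c, s⟩ := x
  simp only [cherries, mem_sigma, mem_univ, mem_powersetCard, true_and] at hx
  obtain ⟨hs, hs2⟩ := hx
  have hcs : c ∉ s := fun h => notMem_dirNbhd_self hasym c (hs h)
  simp only [triadsCovGeTwo, mem_filter, mem_univ, true_and, card_insert_of_notMem hcs, hs2]
  exact hs2 ▸ card_le_covCount_insert hs

theorem card_cherries_filter_insert_eq_le [Fintype V] [DecidableEq V]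
    (hasym : ∀ x y : V, d x y → ¬ d y x) (t : Finset V) :
    #{x ∈ cherries d | insert x.1 x.2 = t} ≤ #t := by
  refine (card_le_card ?_).trans
    (card_image_le (f := fun c => (⟨c, t.erase c⟩ : Σ _ : V, Finset V)))
  rintro ⟨c, s⟩ hx
  simp only [cherries, mem_filter, mem_sigma, mem_univ, mem_powersetCard, true_and] at hx
  obtain ⟨⟨hs, -⟩, rfl⟩ := hx
  have hcs : c ∉ s := fun h => notMem_dirNbhd_self hasym c (hs h)
  exact mem_image.2 ⟨c, mem_insert_self c s, by rw [erase_insert hcs]⟩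

theorem card_cherries_le [Fintype V] (hasym : ∀ x y : V, d x y → ¬ d y x) :
    #(cherries d) ≤ 3 * #(triadsCovGeTwo d) := by
  classical
  refine card_le_mul_card_image_of_maps_to (fun x hx => insert_mem_triadsCovGeTwo hasym hx) 3 ?_
  intro t ht
  simp only [triadsCovGeTwo, mem_filter] at ht
  exact ht.2.1 ▸ card_cherries_filter_insert_eq_le hasym t

theorem ncard_add_ncard_eq_card_triadsCovGeTwo [Fintype V]
    (hasym : ∀ x y : V, d x y → ¬ d y x) :
    {t : Finset V | #t = 3 ∧ covCount d t = 2}.ncard +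
      {t : Finset V | #t = 3 ∧ covCount d t = 3}.ncard = #(triadsCovGeTwo d) := by
  classical
  rw [← Set.ncard_union_eq, ← Set.ncard_coe_finset]
  · congr 1
    ext t
    have hle : #t = 3 → covCount d t ≤ 3 := fun h3 => by
      simpa [h3] using covCount_le_choose_two hasym t
    simp only [triadsCovGeTwo, coe_filter, mem_univ, true_and, Set.mem_union, Set.mem_ofPred_eq]
    omega
  · rw [Set.disjoint_left]
    rintro t ⟨-, h2⟩ ⟨-, h3⟩
    omega

end

theorem sum_choose_degDir_le_general {V : Type*} [Fintype V] (d : V → V → Prop)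
    (hasym : ∀ x y : V, d x y → ¬ d y x) :
    ∑ c : V, Nat.choose (degDir d c) 2 ≤
      3 * ({t : Finset V | t.card = 3 ∧ covCount d t = 2}.ncard +
        {t : Finset V | t.card = 3 ∧ covCount d t = 3}.ncard) := by
  rw [← card_cherries, ncard_add_ncard_eq_card_triadsCovGeTwo hasym]
  exact card_cherries_le hasym

theorem sum_choose_degDir_le {V : Type*} [Fintype V] (d : V → V → Prop)
    (hirr : ∀ v : V, ¬ d v v)
    (hasym : ∀ x y : V, d x y → ¬ d y x) :
    ∑ c : V, Nat.choose (degDir d c) 2 ≤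
      3 * ({t : Finset V | t.card = 3 ∧ covCount d t = 2}.ncard +
        {t : Finset V | t.card = 3 ∧ covCount d t = 3}.ncard) :=
  sum_choose_degDir_le_general d hasym
end

section
/- In any generalized tournament graph with n vertices and m directed edges, the number of triads not covered by any directed edge is at least F(n,m) := (1/6)(-2n·floor(2m/n)^2 + (8m - 2n)·floor(2m/n) + (n-2)((n-1)n - 6m)). -/
open Finset

lemma Finset.natCast_card_offDiag {α : Type*} [DecidableEq α] (s : Finset α) :
    (#s.offDiag : ℤ) = #s * (#s - 1) := by
  rw [offDiag_card, Nat.cast_sub (Nat.le_mul_self _)]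
  push_cast
  ring

lemma Nat.six_mul_choose_three (n : ℕ) : 6 * (n.choose 3 : ℤ) = n * (n - 1) * (n - 2) := by
  induction n with
  | zero => simp
  | succ n ih =>
    have h2 : 2 * (n.choose 2 : ℤ) = n * (n - 1) := by
      qify
      rw [Nat.cast_choose_two]
      ring
    rw [Nat.choose_succ_succ', Nat.cast_add]
    push_cast
    linear_combination ih + 3 * h2

/-- `x ↦ x (x - 1)` lies above its secant through `q` and `q + 1` at every integer. -/
lemma Int.secant_le_mul_sub_one (q x : ℤ) : q * (q - 1) + 2 * q * (x - q) ≤ x * (x - 1) := by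
  have h : 0 ≤ (x - q) * (x - q - 1) := by
    rcases le_or_gt (x - q) 0 with h | h <;> nlinarith
  nlinarith

namespace SimpleGraph

section

variable {V : Type*} [Fintype V] [DecidableEq V] (G : SimpleGraph V) [DecidableRel G.Adj]

lemma card_edgeFinset_inter_sym2_le (t : Finset V) :
    #(G.edgeFinset ∩ t.sym2) ≤ (#t).choose 2 := by
  have hdiag : t.image Sym2.diag ⊆ t.sym2 := by
    intro z hz
    obtain ⟨a, ha, rfl⟩ := mem_image.mp hz
    exact mk_mem_sym2_iff.mpr ⟨ha, ha⟩
  have hsub : G.edgeFinset ∩ t.sym2 ⊆ t.sym2 \ t.image Sym2.diag := by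
    intro z hz
    obtain ⟨hzG, hzt⟩ := mem_inter.mp hz
    refine mem_sdiff.mpr ⟨hzt, fun hd => ?_⟩
    obtain ⟨a, -, rfl⟩ := mem_image.mp hd
    exact G.not_isDiag_of_mem_edgeFinset hzG (Sym2.diag_isDiag a)
  calc #(G.edgeFinset ∩ t.sym2) ≤ #(t.sym2 \ t.image Sym2.diag) := card_le_card hsub
    _ = (#t + 1).choose 2 - #t := by
      rw [card_sdiff_of_subset hdiag, card_sym2, card_image_of_injective _ Sym2.diag_injective]
    _ = (#t).choose 2 := by simp [Nat.choose_succ_succ']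

lemma card_edgeFinset_inter_sym2_eq_zero_iff {t : Finset V} :
    #(G.edgeFinset ∩ t.sym2) = 0 ↔ G.IsIndepSet (t : Set V) := by
  simp only [card_eq_zero, eq_empty_iff_forall_notMem, mem_inter, mem_edgeFinset, not_and,
    Sym2.forall, mem_edgeSet, mk_mem_sym2_iff, isIndepSet_iff, Set.Pairwise, mem_coe]
  grind [Adj.ne]

lemma indepSetFinset_eq_filter (n : ℕ) :
    G.indepSetFinset n =
      {t ∈ powersetCard n (univ : Finset V) | #(G.edgeFinset ∩ t.sym2) = 0} := by
  ext t
  simp only [mem_indepSetFinset_iff, isNIndepSet_iff, mem_filter, mem_powersetCard_univ,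
    card_edgeFinset_inter_sym2_eq_zero_iff, and_comm]

lemma sum_card_edgeFinset_inter_sym2 {k : ℕ} (hk : 2 ≤ k) :
    ∑ t ∈ powersetCard k univ, #(G.edgeFinset ∩ t.sym2)
      = #G.edgeFinset * (Fintype.card V - 2).choose (k - 2) := by
  simp only [← filter_mem_eq_inter, card_filter]
  rw [sum_comm, ← smul_eq_mul, ← sum_const]
  refine sum_congr rfl fun e he => ?_
  have he2 : #e.toFinset = 2 := G.card_toFinset_mem_edgeFinset ⟨e, he⟩
  rw [← card_filter, ← he2, ← card_univ]
  simp_rw [mem_sym2_iff, ← Sym2.mem_toFinset, ← subset_iff]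
  exact card_filter_powersetCard_subset _ _ _ (subset_univ _) (he2 ▸ hk)

/-- `(a, b) ↦ (s(v, a), s(v, b))` embeds the pairs of distinct neighbours of `v` into the pairs of
distinct edges of the triad `{v, a, b}`; `v` is recovered as the common endpoint. -/
lemma sum_degree_mul_sub_one_le :
    ∑ v, (G.degree v : ℤ) * (G.degree v - 1) ≤
      ∑ t ∈ powersetCard 3 univ,
        (#(G.edgeFinset ∩ t.sym2) : ℤ) * (#(G.edgeFinset ∩ t.sym2) - 1) := by
  simp only [← card_neighborFinset_eq_degree, ← natCast_card_offDiag, ← Nat.cast_sum,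
    ← card_sigma, Nat.cast_le]
  refine card_le_card_of_injOn
    (fun x => ⟨{x.1, x.2.1, x.2.2}, (s(x.1, x.2.1), s(x.1, x.2.2))⟩) ?_ ?_
  · rintro ⟨v, a, b⟩ hx
    simp only [coe_sigma, Set.mem_sigma_iff, mem_coe, mem_univ, mem_offDiag,
      mem_neighborFinset, true_and] at hx
    obtain ⟨hva, hvb, hab⟩ := hx
    simp [hva.ne, hvb.ne, hab, hva, hvb]
  · rintro ⟨v, a, b⟩ hx ⟨v', a', b'⟩ hy h
    simp only [coe_sigma, Set.mem_sigma_iff, mem_coe, mem_univ, mem_offDiag,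
      mem_neighborFinset, true_and] at hx hy
    simp only [Sigma.mk.injEq, heq_eq_eq, Prod.mk.injEq, Sym2.eq_iff] at h
    grind [Adj.ne]

theorem le_six_mul_card_indepSetFinset_three (q : ℤ) :
    -2 * (Fintype.card V : ℤ) * q ^ 2 + (8 * #G.edgeFinset - 2 * Fintype.card V) * q
        + ((Fintype.card V : ℤ) - 2) * ((Fintype.card V - 1) * Fintype.card V - 6 * #G.edgeFinset)
      ≤ 6 * #(G.indepSetFinset 3) := by
  set T := powersetCard 3 (univ : Finset V)
  set e : Finset V → ℕ := fun t => #(G.edgeFinset ∩ t.sym2)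
  have h_triad : ∀ t ∈ T, ((e t : ℤ) - 1) * (e t - 3) ≤ if e t = 0 then 3 else 0 := by
    intro t ht
    have h3 : e t ≤ 3 := by
      simpa [mem_powersetCard_univ.mp ht] using G.card_edgeFinset_inter_sym2_le t
    generalize e t = k at h3 ⊢
    interval_cases k <;> norm_num
  have h_indep : 3 * (#(G.indepSetFinset 3) : ℤ) = ∑ t ∈ T, if e t = 0 then 3 else 0 := by
    rw [indepSetFinset_eq_filter, sum_ite, sum_const_zero, add_zero, sum_const, nsmul_eq_mul,
      mul_comm]
  have h_edges : ∑ t ∈ T, (e t : ℤ) = #G.edgeFinset * ((Fintype.card V : ℤ) - 2) := by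
    rw [← Nat.cast_sum, G.sum_card_edgeFinset_inter_sym2 (by norm_num), Nat.choose_one_right]
    rcases le_or_gt 2 (Fintype.card V) with hn | hn
    · push_cast [hn]
      rfl
    · have hm : #G.edgeFinset = 0 := Nat.eq_zero_of_le_zero
        (G.card_edgeFinset_le_card_choose_two.trans (Nat.choose_eq_zero_of_lt hn).le)
      simp [hm]
  have h_degrees : Fintype.card V * (q * (q - 1)) + 2 * q * (2 * #G.edgeFinset - Fintype.card V * q)
      ≤ ∑ v, (G.degree v : ℤ) * (G.degree v - 1) := by
    have h_handshake : ∑ v, (G.degree v : ℤ) = 2 * #G.edgeFinset := by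
      exact_mod_cast G.sum_degrees_eq_twice_card_edges
    calc _ = ∑ v, (q * (q - 1) + 2 * q * ((G.degree v : ℤ) - q)) := by
          rw [sum_add_distrib, ← mul_sum _ _ (2 * q), sum_sub_distrib, h_handshake, sum_const,
            sum_const, card_univ, nsmul_eq_mul, nsmul_eq_mul]
      _ ≤ _ := sum_le_sum fun v _ => Int.secant_le_mul_sub_one q _
  have h_T : 6 * (#T : ℤ) = Fintype.card V * (Fintype.card V - 1) * (Fintype.card V - 2) := by
    rw [card_powersetCard, card_univ]
    exact Nat.six_mul_choose_three _
  have h_split : ∑ t ∈ T, ((e t : ℤ) - 1) * (e t - 3)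
      = ∑ t ∈ T, (e t : ℤ) * (e t - 1) - 3 * ∑ t ∈ T, (e t : ℤ) + 3 * #T := by
    rw [mul_sum, ← sum_sub_distrib, card_eq_sum_ones, Nat.cast_sum, mul_sum, ← sum_add_distrib]
    exact sum_congr rfl fun t _ => by ring
  linarith [sum_le_sum h_triad, G.sum_degree_mul_sub_one_le]

end

lemma card_edgeFinset_fromRel {V : Type*} [Fintype V] {d : V → V → Prop}
    [DecidableRel (fromRel d).Adj] (hasym : ∀ x y, d x y → ¬ d y x) :
    #(fromRel d).edgeFinset = {p : V × V | d p.1 p.2}.ncard := by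
  have hinj : Set.InjOn (fun p : V × V => s(p.1, p.2)) {p | d p.1 p.2} := by
    rintro ⟨a, b⟩ hab ⟨a', b'⟩ hab' h
    rcases Sym2.mk_eq_mk_iff.mp h with h | h
    · exact h
    · simp only [Prod.swap_prod_mk, Prod.mk.injEq] at h
      obtain ⟨rfl, rfl⟩ := h
      exact absurd hab' (hasym _ _ hab)
  have himage : (fun p : V × V => s(p.1, p.2)) '' {p | d p.1 p.2} = (fromRel d).edgeSet := by
    ext z
    induction z using Sym2.ind with | h a b => ?_
    simp only [Set.mem_image, Set.mem_ofPred_eq, Prod.exists, Sym2.eq_iff, mem_edgeSet,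
      fromRel_adj]
    constructor
    · rintro ⟨x, y, hxy, ⟨rfl, rfl⟩ | ⟨rfl, rfl⟩⟩
      exacts [⟨fun h => hasym _ _ hxy (h ▸ hxy), Or.inl hxy⟩,
        ⟨fun h => hasym _ _ hxy (h ▸ hxy), Or.inr hxy⟩]
    · rintro ⟨-, h | h⟩
      exacts [⟨a, b, h, Or.inl ⟨rfl, rfl⟩⟩, ⟨b, a, h, Or.inr ⟨rfl, rfl⟩⟩]
  rw [← Set.ncard_coe_finset, coe_edgeFinset, ← himage, hinj.ncard_image]

end SimpleGraph

lemma covCount_eq_zero_iff {V : Type*} {d : V → V → Prop} (hirr : ∀ v, ¬ d v v) (t : Finset V) :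
    covCount d t = 0 ↔ (SimpleGraph.fromRel d).IsIndepSet (t : Set V) := by
  have hfin : {p : V × V | p.1 ∈ t ∧ p.2 ∈ t ∧ d p.1 p.2}.Finite :=
    (t ×ˢ t).finite_toSet.subset fun p hp => mem_product.mpr ⟨hp.1, hp.2.1⟩
  rw [covCount, Set.ncard_eq_zero hfin, SimpleGraph.isIndepSet_iff, Set.eq_empty_iff_forall_notMem]
  constructor
  · rintro h a ha b hb - ⟨-, hd | hd⟩
    exacts [h (a, b) ⟨ha, hb, hd⟩, h (b, a) ⟨hb, ha, hd⟩]
  · rintro h ⟨a, b⟩ ⟨ha, hb, hd⟩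
    have hab : a ≠ b := by
      rintro rfl
      exact hirr a hd
    exact h ha hb hab ((SimpleGraph.fromRel_adj d a b).mpr ⟨hab, Or.inl hd⟩)

theorem uncovered_triads_lower_bound {V : Type*} [Fintype V] (d : V → V → Prop)
    (hirr : ∀ v : V, ¬ d v v)
    (hasym : ∀ x y : V, d x y → ¬ d y x)
    (n m : ℕ) (hn : Fintype.card V = n)
    (hm : {p : V × V | d p.1 p.2}.ncard = m) :
    (-2 * (n : ℤ) * ((2 * m / n : ℕ) : ℤ) ^ 2 +
        (8 * (m : ℤ) - 2 * (n : ℤ)) * ((2 * m / n : ℕ) : ℤ) +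
        ((n : ℤ) - 2) * (((n : ℤ) - 1) * (n : ℤ) - 6 * (m : ℤ)))
      ≤ 6 * ({t : Finset V | t.card = 3 ∧ covCount d t = 0}.ncard : ℤ) := by
  classical
  have h_uncovered : {t : Finset V | t.card = 3 ∧ covCount d t = 0}
      = ↑((SimpleGraph.fromRel d).indepSetFinset 3) := by
    ext t
    simp [SimpleGraph.isNIndepSet_iff, covCount_eq_zero_iff hirr, and_comm]
  rw [h_uncovered, Set.ncard_coe_finset, ← hn, ← hm,
    ← SimpleGraph.card_edgeFinset_fromRel hasym]
  -- the bound holds for every integer `q`; `⌊2m/n⌋`, the integer part of the average degree,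
  -- is the optimal choice
  exact (SimpleGraph.fromRel d).le_six_mul_card_indepSetFinset_three _
end

section
/- Define F(n,m) = (1/6)(-2n·floor(2m/n)^2 + (8m-2n)·floor(2m/n) + (n-2)((n-1)n - 6m)) and X(n) = C(floor(n/2),2) + C(ceil(n/2),2). Then for every integer n ≥ 3: F(n, X(n)) = 0; F(n, X(n) - k) ≥ 1 for every integer k with 0 < k < X(n); and F(n, X(n) + k) ≤ 0 for every integer k with 0 < k ≤ C(n,2) - X(n). -/
noncomputable def Ffun (n m : ℕ) : ℚ :=
  (1 / 6 : ℚ) *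
    (-2 * (n : ℚ) * ((2 * m / n : ℕ) : ℚ) ^ 2 +
      (8 * (m : ℚ) - 2 * (n : ℚ)) * ((2 * m / n : ℕ) : ℚ) +
      ((n : ℚ) - 2) * (((n : ℚ) - 1) * (n : ℚ) - 6 * (m : ℚ)))

def Xfun (n : ℕ) : ℕ := Nat.choose (n / 2) 2 + Nat.choose ((n + 1) / 2) 2

def Pz (n q m : ℤ) : ℤ :=
  -2*n*q^2 + (8*m-2*n)*q + (n-2)*((n-1)*n-6*m)

lemma Ffun_eq (n m : ℕ) :
    Ffun n m * 6 = ((Pz (n:ℤ) ((2*m/n : ℕ) : ℤ) (m:ℤ) : ℤ) : ℚ) := by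
  unfold Ffun Pz
  generalize (2 * m / n : ℕ) = Q
  push_cast
  ring

lemma bridge0 (n m : ℕ) (h : Pz (n:ℤ) ((2*m/n : ℕ) : ℤ) (m:ℤ) = 0) : Ffun n m = 0 := by
  have h6 := Ffun_eq n m
  rw [h] at h6
  norm_num at h6
  linarith

lemma bridge1 (n m : ℕ) (h : 6 ≤ Pz (n:ℤ) ((2*m/n : ℕ) : ℤ) (m:ℤ)) : 1 ≤ Ffun n m := by
  have h6 := Ffun_eq n m
  have : (6:ℚ) ≤ Ffun n m * 6 := by rw [h6]; exact_mod_cast h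
  linarith

lemma bridge2 (n m : ℕ) (h : Pz (n:ℤ) ((2*m/n : ℕ) : ℤ) (m:ℤ) ≤ 0) : Ffun n m ≤ 0 := by
  have h6 := Ffun_eq n m
  have : Ffun n m * 6 ≤ 0 := by rw [h6]; exact_mod_cast h
  linarith

lemma choose2 (s : ℕ) : 2 * Nat.choose s 2 + s = s * s := by
  induction s with
  | zero => rfl
  | succ s ih =>
    rw [Nat.choose_succ_succ, Nat.choose_one_right]
    nlinarith [ih]

-- even case, n = 2t
lemma F_even_zero (n t q r m : ℤ) (hnt : n = 2*t) (ht : 2 ≤ t) (hr0 : 0 ≤ r) (hr1 : r < n)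
    (hq0 : 0 ≤ q) (hm : 2*m = n*q + r) (hX : 2*m = 2*t*t - 2*t) : Pz n q m = 0 := by
  subst hnt
  have h1 : q < t := by nlinarith
  have h2 : t - 2 < q := by nlinarith
  have hqe : q = t - 1 := by omega
  subst hqe
  have hre : r = 0 := by nlinarith
  unfold Pz
  nlinarith [hm, hre]

lemma F_even_low (n t q r m : ℤ) (hnt : n = 2*t) (ht : 2 ≤ t) (hr0 : 0 ≤ r) (hr1 : r < n)
    (hq0 : 0 ≤ q) (hm : 2*m = n*q + r) (hhi : 2*m ≤ 2*t*t - 2*t - 2) : 6 ≤ Pz n q m := by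
  subst hnt
  have h1 : q < t - 1 := by nlinarith
  have hq : q ≤ t - 2 := by omega
  unfold Pz
  nlinarith [sq_nonneg (t-q-2), sq_nonneg (t-q), mul_nonneg hq0 hr0, sq_nonneg (q-1),
    mul_nonneg (sub_nonneg.2 hq) hr0]

lemma F_even_high (n t q r m : ℤ) (hnt : n = 2*t) (ht : 2 ≤ t) (hr0 : 0 ≤ r) (hr1 : r < n)
    (hq0 : 0 ≤ q) (hm : 2*m = n*q + r) (hlo : 2*t*t - 2*t + 2 ≤ 2*m)
    (hhi : 2*m ≤ 2*t*(2*t-1)) : Pz n q m ≤ 0 := by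
  subst hnt
  have h1 : q < 2*t := by nlinarith
  rcases eq_or_lt_of_le (show q ≤ 2*t - 1 by omega) with hq | hq
  · subst hq
    have hre : r = 0 := by nlinarith
    unfold Pz
    nlinarith [hm, hre]
  · have hq' : q ≤ 2*t - 2 := by omega
    unfold Pz
    nlinarith [mul_nonneg hr0 hq0, mul_nonneg (sub_nonneg.2 hq') hr0,
      mul_nonneg (sub_nonneg.2 hq') (sub_nonneg.2 (show r ≤ 2*t-1 by omega)),
      sq_nonneg (q-t+1), sq_nonneg (q-2*t+2),
      mul_nonneg (sub_nonneg.2 hq') (sub_nonneg.2 hq'),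
      mul_nonneg (sub_nonneg.2 (show r ≤ 2*t-1 by omega)) hq0]

-- odd case, n = 2t+1
lemma F_odd_zero (n t q r m : ℤ) (hnt : n = 2*t+1) (ht : 1 ≤ t) (hr0 : 0 ≤ r) (hr1 : r < n)
    (hq0 : 0 ≤ q) (hm : 2*m = n*q + r) (hX : 2*m = 2*t*t) : Pz n q m = 0 := by
  subst hnt
  have h1 : q < t := by nlinarith
  have h2 : t - 2 < q := by nlinarith
  have hqe : q = t - 1 := by omega
  subst hqe
  have hre : r = t + 1 := by nlinarith
  unfold Pz
  nlinarith [hm, hre]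

lemma F_odd_low (n t q r m : ℤ) (hnt : n = 2*t+1) (ht : 1 ≤ t) (hr0 : 0 ≤ r) (hr1 : r < n)
    (hq0 : 0 ≤ q) (hm : 2*m = n*q + r) (hm1 : 1 ≤ m) (hhi : 2*m ≤ 2*t*t - 2) :
    6 ≤ Pz n q m := by
  subst hnt
  have h1 : q < t := by nlinarith
  have hq : q ≤ t - 1 := by omega
  unfold Pz
  nlinarith [mul_nonneg hr0 hq0, mul_nonneg (sub_nonneg.2 hq) hr0, sq_nonneg (q-t+1),
    sq_nonneg (q-t), mul_nonneg (sub_nonneg.2 hq) (sub_nonneg.2 hq),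
    mul_nonneg (sub_nonneg.2 (show r ≤ 2*t by omega)) hq0]

lemma F_odd_high (n t q r m : ℤ) (hnt : n = 2*t+1) (ht : 1 ≤ t) (hr0 : 0 ≤ r) (hr1 : r < n)
    (hq0 : 0 ≤ q) (hm : 2*m = n*q + r) (hlo : 2*t*t + 2 ≤ 2*m)
    (hhi : 2*m ≤ 2*t*(2*t+1)) : Pz n q m ≤ 0 := by
  subst hnt
  have h1 : q < 2*t + 1 := by nlinarith
  rcases eq_or_lt_of_le (show q ≤ 2*t by omega) with hq | hq
  · subst hq
    have hre : r = 0 := by nlinarith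
    unfold Pz
    nlinarith [hm, hre]
  · have hq' : q ≤ 2*t - 1 := by omega
    unfold Pz
    nlinarith [mul_nonneg hr0 hq0, mul_nonneg (sub_nonneg.2 hq') hr0,
      mul_nonneg (sub_nonneg.2 hq') (sub_nonneg.2 (show r ≤ 2*t by omega)),
      sq_nonneg (2*q-2*t+1), sq_nonneg (q-2*t+1),
      mul_nonneg (sub_nonneg.2 (show r ≤ 2*t by omega)) hq0]

theorem Ffun_sign (n : ℕ) (hn : 3 ≤ n) :
    Ffun n (Xfun n) = 0 ∧
    (∀ k : ℕ, 0 < k → k < Xfun n → 1 ≤ Ffun n (Xfun n - k)) ∧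
    (∀ k : ℕ, 0 < k → k ≤ Nat.choose n 2 - Xfun n → Ffun n (Xfun n + k) ≤ 0) := by
  have hn0 : 0 < n := by omega
  have hC : 2 * Nat.choose n 2 + n = n * n := choose2 n
  have hCz : 2 * ((Nat.choose n 2 : ℕ) : ℤ) + (n:ℤ) = (n:ℤ)*(n:ℤ) := by exact_mod_cast hC
  have key : ∀ m : ℕ, ∃ r : ℤ, 0 ≤ r ∧ r < (n:ℤ) ∧
      2*(m:ℤ) = (n:ℤ) * ((2*m/n : ℕ) : ℤ) + r ∧ 0 ≤ ((2*m/n : ℕ) : ℤ) := by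
    intro m
    refine ⟨((2*m % n : ℕ) : ℤ), by positivity, ?_, ?_, by positivity⟩
    · exact_mod_cast Nat.mod_lt _ hn0
    · exact_mod_cast (Nat.div_add_mod (2*m) n).symm
  rcases Nat.even_or_odd n with ⟨s, hs⟩ | ⟨s, hs⟩
  · -- even, n = s + s
    have hs2 : 2 ≤ s := by omega
    have hd1 : n / 2 = s := by omega
    have hd2 : (n+1) / 2 = s := by omega
    have hX : 2 * Xfun n + 2*s = 2*(s*s) := by
      unfold Xfun
      rw [hd1, hd2]
      linarith [choose2 s]
    have hXz : 2 * ((Xfun n : ℕ) : ℤ) = 2*(s:ℤ)*(s:ℤ) - 2*(s:ℤ) := by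
      have := congrArg (Nat.cast : ℕ → ℤ) hX
      push_cast at this
      linarith
    have hnt : (n:ℤ) = 2*(s:ℤ) := by push_cast [hs]; ring
    have ht2 : (2:ℤ) ≤ (s:ℤ) := by exact_mod_cast hs2
    refine ⟨?_, ?_, ?_⟩
    · obtain ⟨r, hr0, hr1, hm, hq0⟩ := key (Xfun n)
      exact bridge0 n _ (F_even_zero _ (s:ℤ) _ r _ hnt ht2 hr0 hr1 hq0 hm (by linarith))
    · intro k hk0 hk
      obtain ⟨r, hr0, hr1, hm, hq0⟩ := key (Xfun n - k)
      have hmk : (((Xfun n - k : ℕ)) : ℤ) = (Xfun n : ℤ) - (k : ℤ) := by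
        have hkX : k ≤ Xfun n := le_of_lt hk
        push_cast [hkX]; ring
      have hk1 : (1:ℤ) ≤ (k:ℤ) := by exact_mod_cast hk0
      refine bridge1 n _ (F_even_low _ (s:ℤ) _ r _ hnt ht2 hr0 hr1 hq0 hm ?_)
      rw [hmk]; linarith
    · intro k hk0 hk
      obtain ⟨r, hr0, hr1, hm, hq0⟩ := key (Xfun n + k)
      have hkX : Xfun n + k ≤ Nat.choose n 2 := by omega
      have hk1 : (1:ℤ) ≤ (k:ℤ) := by exact_mod_cast hk0
      have h2 : ((Xfun n : ℤ) + (k:ℤ)) ≤ (Nat.choose n 2 : ℤ) := by exact_mod_cast hkX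
      have h3 : 2 * (Nat.choose n 2 : ℤ) = 2*(s:ℤ)*(2*(s:ℤ)-1) := by
        rw [hnt] at hCz; linarith [hCz]
      refine bridge2 n _ (F_even_high _ (s:ℤ) _ r _ hnt ht2 hr0 hr1 hq0 hm ?_ ?_)
      · push_cast; linarith
      · push_cast; linarith [h2, h3]
  · -- odd, n = 2s+1
    have hs1 : 1 ≤ s := by omega
    have hd1 : n / 2 = s := by omega
    have hd2 : (n+1) / 2 = s + 1 := by omega
    have hX : 2 * Xfun n = 2*(s*s) := by
      unfold Xfun
      rw [hd1, hd2]
      nlinarith [choose2 s, choose2 (s+1)]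
    have hXz : 2 * ((Xfun n : ℕ) : ℤ) = 2*(s:ℤ)*(s:ℤ) := by
      have := congrArg (Nat.cast : ℕ → ℤ) hX
      push_cast at this
      linarith
    have hnt : (n:ℤ) = 2*(s:ℤ)+1 := by push_cast [hs]; ring
    have ht1 : (1:ℤ) ≤ (s:ℤ) := by exact_mod_cast hs1
    refine ⟨?_, ?_, ?_⟩
    · obtain ⟨r, hr0, hr1, hm, hq0⟩ := key (Xfun n)
      exact bridge0 n _ (F_odd_zero _ (s:ℤ) _ r _ hnt ht1 hr0 hr1 hq0 hm (by linarith))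
    · intro k hk0 hk
      obtain ⟨r, hr0, hr1, hm, hq0⟩ := key (Xfun n - k)
      have hmk : (((Xfun n - k : ℕ)) : ℤ) = (Xfun n : ℤ) - (k : ℤ) := by
        have hkX : k ≤ Xfun n := le_of_lt hk
        push_cast [hkX]; ring
      have hk1 : (1:ℤ) ≤ (k:ℤ) := by exact_mod_cast hk0
      have hm1 : (1:ℤ) ≤ ((Xfun n - k : ℕ) : ℤ) := by
        have : 1 ≤ Xfun n - k := by omega
        exact_mod_cast this
      refine bridge1 n _ (F_odd_low _ (s:ℤ) _ r _ hnt ht1 hr0 hr1 hq0 hm hm1 ?_)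
      rw [hmk]; linarith
    · intro k hk0 hk
      obtain ⟨r, hr0, hr1, hm, hq0⟩ := key (Xfun n + k)
      have hkX : Xfun n + k ≤ Nat.choose n 2 := by omega
      have hk1 : (1:ℤ) ≤ (k:ℤ) := by exact_mod_cast hk0
      have h2 : ((Xfun n : ℤ) + (k:ℤ)) ≤ (Nat.choose n 2 : ℤ) := by exact_mod_cast hkX
      have h3 : 2 * (Nat.choose n 2 : ℤ) = 2*(s:ℤ)*(2*(s:ℤ)+1) := by
        rw [hnt] at hCz; linarith [hCz]
      refine bridge2 n _ (F_odd_high _ (s:ℤ) _ r _ hnt ht1 hr0 hr1 hq0 hm ?_ ?_)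
      · push_cast; linarith
      · push_cast; linarith [h2, h3]
end

section
/- Define Y(n) = C(n,3) - (C(floor(n/2),3) - I(floor(n/2))) - (C(ceil(n/2),3) - I(ceil(n/2))), where I(k) = (k^3-k)/24 for k odd and (k^3-4k)/24 for k even (and I(k)=0 for k<3). Then for all integers n ≥ 3: Y(n) = (13n^3 - 24n^2 - 16n)/96 if n ≡ 0 mod 4; Y(n) = (13n^3 - 24n^2 - 19n + 30)/96 if n ≡ 1 mod 4; Y(n) = (13n^3 - 24n^2 - 4n)/96 if n ≡ 2 mod 4; and Y(n) = (13n^3 - 24n^2 - 19n + 18)/96 if n ≡ 3 mod 4. Moreover Y(n)/C(n,3) tends to 13/16 = 0.8125 as n → ∞. -/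
/-- Kendall–Babington Smith maximal number of cyclic triads in a tournament on `k` vertices. -/
def Ifun (k : ℕ) : ℕ :=
  if k < 3 then 0 else if Odd k then (k ^ 3 - k) / 24 else (k ^ 3 - 4 * k) / 24

/-- Maximal number of inconsistent triads in a gt-graph on `n` vertices. -/
noncomputable def Yfun (n : ℕ) : ℚ :=
  (Nat.choose n 3 : ℚ) -
    ((Nat.choose (n / 2) 3 : ℚ) - (Ifun (n / 2) : ℚ)) -
    ((Nat.choose ((n + 1) / 2) 3 : ℚ) - (Ifun ((n + 1) / 2) : ℚ))

private lemma c2 (j : ℕ) : 2 * Nat.choose (j + 1) 2 = (j + 1) * j := by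
  induction j with
  | zero => rfl
  | succ j ih =>
    show 2 * Nat.choose (j + 2) 2 = (j + 2) * (j + 1)
    have h1 : Nat.choose (j + 2) 2 = Nat.choose (j + 1) 1 + Nat.choose (j + 1) 2 :=
      Nat.choose_succ_succ _ _
    have h2 : Nat.choose (j + 1) 1 = j + 1 := Nat.choose_one_right _
    have h3 : (j + 2) * (j + 1) = (j + 1) * j + 2 * (j + 1) := by ring
    omega

private lemma c3 (j : ℕ) : 6 * Nat.choose (j + 2) 3 = (j + 2) * (j + 1) * j := by
  induction j with
  | zero => rfl
  | succ j ih =>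
    show 6 * Nat.choose (j + 3) 3 = (j + 3) * (j + 2) * (j + 1)
    have h1 : Nat.choose (j + 3) 3 = Nat.choose (j + 2) 2 + Nat.choose (j + 2) 3 :=
      Nat.choose_succ_succ _ _
    have h2 : 2 * Nat.choose (j + 2) 2 = (j + 2) * (j + 1) := c2 (j + 1)
    have h3 : (j + 3) * (j + 2) * (j + 1) = (j + 2) * (j + 1) * j + 3 * ((j + 2) * (j + 1)) := by
      ring
    omega

private lemma castc3 (m : ℕ) : (Nat.choose m 3 : ℚ) = m * ((m : ℚ) - 1) * ((m : ℚ) - 2) / 6 := by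
  match m with
  | 0 => norm_num
  | 1 => simp [Nat.choose]
  | (j + 2) =>
    have h := c3 j
    have h' : ((6 * Nat.choose (j + 2) 3 : ℕ) : ℚ) = (((j + 2) * (j + 1) * j : ℕ) : ℚ) := by
      rw [h]
    push_cast at h'
    push_cast
    linarith

private lemma d3 (k : ℕ) : 3 ∣ k ^ 3 - k := by
  induction k with
  | zero => simp
  | succ k ih =>
    have h1 : (k + 1) ^ 3 = k ^ 3 + 3 * k ^ 2 + 3 * k + 1 := by ring
    have h2 : k ≤ k ^ 3 := Nat.le_self_pow (by norm_num) k
    omega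

private lemma d6 (k : ℕ) : 6 ∣ k * (k + 1) * (2 * k + 1) := by
  induction k with
  | zero => simp
  | succ k ih =>
    show 6 ∣ (k + 1) * (k + 1 + 1) * (2 * (k + 1) + 1)
    have h1 : (k + 1) * (k + 1 + 1) * (2 * (k + 1) + 1)
        = k * (k + 1) * (2 * k + 1) + 6 * ((k + 1) * (k + 1)) := by ring
    omega

private lemma IfunE_nat (k : ℕ) : 3 * Ifun (2 * k) = k ^ 3 - k := by
  unfold Ifun
  rcases Nat.lt_or_ge (2 * k) 3 with h | h
  · rw [if_pos h]
    have hk : k ≤ 1 := by omega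
    interval_cases k <;> simp
  · have hodd : ¬ Odd (2 * k) := by simp [Nat.odd_iff]
    rw [if_neg (by omega), if_neg hodd]
    have h1 : (2 * k) ^ 3 = 8 * k ^ 3 := by ring
    have h2 : k ≤ k ^ 3 := Nat.le_self_pow (by norm_num) k
    obtain ⟨m, hm⟩ := d3 k
    omega

private lemma IfunO_nat (k : ℕ) : 6 * Ifun (2 * k + 1) = k * (k + 1) * (2 * k + 1) := by
  unfold Ifun
  rcases Nat.lt_or_ge (2 * k + 1) 3 with h | h
  · have hk : k = 0 := by omega
    subst hk
    rw [if_pos h]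
  · have hodd : Odd (2 * k + 1) := ⟨k, by ring⟩
    rw [if_neg (by omega), if_pos hodd]
    have h1 : (2 * k + 1) ^ 3 = 8 * k ^ 3 + 12 * k ^ 2 + 6 * k + 1 := by ring
    have h2 : k * (k + 1) * (2 * k + 1) = 2 * k ^ 3 + 3 * k ^ 2 + k := by ring
    obtain ⟨m, hm⟩ := d6 k
    omega

private lemma IfunEQ (k : ℕ) : (Ifun (2 * k) : ℚ) = ((k : ℚ) ^ 3 - k) / 3 := by
  have h := IfunE_nat k
  have hk : k ≤ k ^ 3 := Nat.le_self_pow (by norm_num) k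
  have h' : ((3 * Ifun (2 * k) : ℕ) : ℚ) = ((k ^ 3 - k : ℕ) : ℚ) := by rw [h]
  push_cast [hk] at h'
  linarith

private lemma IfunOQ (k : ℕ) :
    (Ifun (2 * k + 1) : ℚ) = (k : ℚ) * ((k : ℚ) + 1) * (2 * (k : ℚ) + 1) / 6 := by
  have h := IfunO_nat k
  have h' : ((6 * Ifun (2 * k + 1) : ℕ) : ℚ) = ((k * (k + 1) * (2 * k + 1) : ℕ) : ℚ) := by rw [h]
  push_cast at h'
  linarith

private lemma part1 : ∀ n : ℕ, 3 ≤ n →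
    (n % 4 = 0 → Yfun n = (13 * (n : ℚ) ^ 3 - 24 * (n : ℚ) ^ 2 - 16 * n) / 96) ∧
    (n % 4 = 1 → Yfun n = (13 * (n : ℚ) ^ 3 - 24 * (n : ℚ) ^ 2 - 19 * n + 30) / 96) ∧
    (n % 4 = 2 → Yfun n = (13 * (n : ℚ) ^ 3 - 24 * (n : ℚ) ^ 2 - 4 * n) / 96) ∧
    (n % 4 = 3 → Yfun n = (13 * (n : ℚ) ^ 3 - 24 * (n : ℚ) ^ 2 - 19 * n + 18) / 96) := by
  intro n hn
  refine ⟨fun h => ?_, fun h => ?_, fun h => ?_, fun h => ?_⟩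
  · obtain ⟨k, rfl⟩ : ∃ k, n = 4 * k := ⟨n / 4, by omega⟩
    have h2 : 4 * k / 2 = 2 * k := by omega
    have h3 : (4 * k + 1) / 2 = 2 * k := by omega
    simp only [Yfun, h2, h3]
    rw [castc3 (4 * k), castc3 (2 * k), IfunEQ k]
    push_cast
    ring
  · obtain ⟨k, rfl⟩ : ∃ k, n = 4 * k + 1 := ⟨n / 4, by omega⟩
    have h2 : (4 * k + 1) / 2 = 2 * k := by omega
    have h3 : (4 * k + 1 + 1) / 2 = 2 * k + 1 := by omega
    simp only [Yfun, h2, h3]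
    rw [castc3 (4 * k + 1), castc3 (2 * k), castc3 (2 * k + 1), IfunEQ k, IfunOQ k]
    push_cast
    ring
  · obtain ⟨k, rfl⟩ : ∃ k, n = 4 * k + 2 := ⟨n / 4, by omega⟩
    have h2 : (4 * k + 2) / 2 = 2 * k + 1 := by omega
    have h3 : (4 * k + 2 + 1) / 2 = 2 * k + 1 := by omega
    simp only [Yfun, h2, h3]
    rw [castc3 (4 * k + 2), castc3 (2 * k + 1), IfunOQ k]
    push_cast
    ring
  · obtain ⟨k, rfl⟩ : ∃ k, n = 4 * k + 3 := ⟨n / 4, by omega⟩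
    have h2 : (4 * k + 3) / 2 = 2 * k + 1 := by omega
    have h3 : (4 * k + 3 + 1) / 2 = 2 * (k + 1) := by omega
    simp only [Yfun, h2, h3]
    rw [castc3 (4 * k + 3), castc3 (2 * k + 1), castc3 (2 * (k + 1)), IfunOQ k, IfunEQ (k + 1)]
    push_cast
    ring

set_option maxHeartbeats 1000000 in
theorem Yfun_formula_and_limit :
    (∀ n : ℕ, 3 ≤ n →
      (n % 4 = 0 → Yfun n = (13 * (n : ℚ) ^ 3 - 24 * (n : ℚ) ^ 2 - 16 * n) / 96) ∧
      (n % 4 = 1 → Yfun n = (13 * (n : ℚ) ^ 3 - 24 * (n : ℚ) ^ 2 - 19 * n + 30) / 96) ∧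
      (n % 4 = 2 → Yfun n = (13 * (n : ℚ) ^ 3 - 24 * (n : ℚ) ^ 2 - 4 * n) / 96) ∧
      (n % 4 = 3 → Yfun n = (13 * (n : ℚ) ^ 3 - 24 * (n : ℚ) ^ 2 - 19 * n + 18) / 96)) ∧
    Filter.Tendsto (fun n : ℕ => Yfun n / (Nat.choose n 3 : ℚ))
      Filter.atTop (nhds (13 / 16)) := by
  refine ⟨part1, ?_⟩
  have h9 : Filter.Tendsto (fun n : ℕ => (60 : ℚ) / n) Filter.atTop (nhds 0) :=
    tendsto_natCast_atTop_atTop.const_div_atTop 60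
  have hlb : Filter.Tendsto (fun n : ℕ => (13 : ℚ) / 16 - 60 / n) Filter.atTop
      (nhds (13 / 16)) := by
    simpa using tendsto_const_nhds.sub h9
  have hub : Filter.Tendsto (fun n : ℕ => (13 : ℚ) / 16 + 60 / n) Filter.atTop
      (nhds (13 / 16)) := by
    simpa using tendsto_const_nhds.add h9
  have main : ∀ n : ℕ, 3 ≤ n →
      (13 : ℚ) / 16 - 60 / n ≤ Yfun n / (Nat.choose n 3 : ℚ) ∧
      Yfun n / (Nat.choose n 3 : ℚ) ≤ (13 : ℚ) / 16 + 60 / n := by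
    intro n hn
    have hq : (3 : ℚ) ≤ (n : ℚ) := by exact_mod_cast hn
    have hq0 : (0 : ℚ) < (n : ℚ) := by linarith
    have hD : (0 : ℚ) < (n : ℚ) * ((n : ℚ) - 1) * ((n : ℚ) - 2) :=
      mul_pos (mul_pos hq0 (by linarith)) (by linarith)
    have hC : (Nat.choose n 3 : ℚ) = (n : ℚ) * ((n : ℚ) - 1) * ((n : ℚ) - 2) / 6 := castc3 n
    obtain ⟨E, hE, hlo, hhi⟩ : ∃ E : ℚ, Yfun n = E / 96 ∧
        13 * (n : ℚ) ^ 3 - 24 * (n : ℚ) ^ 2 - 19 * (n : ℚ) ≤ E ∧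
        E ≤ 13 * (n : ℚ) ^ 3 - 24 * (n : ℚ) ^ 2 - 4 * (n : ℚ) + 30 := by
      have h4 := part1 n hn
      have hm : n % 4 = 0 ∨ n % 4 = 1 ∨ n % 4 = 2 ∨ n % 4 = 3 := by omega
      rcases hm with h | h | h | h
      · exact ⟨_, h4.1 h, by linarith, by linarith⟩
      · exact ⟨_, h4.2.1 h, by linarith, by linarith⟩
      · exact ⟨_, h4.2.2.1 h, by linarith, by linarith⟩
      · exact ⟨_, h4.2.2.2 h, by linarith, by linarith⟩
    rw [hE, hC]
    have hDne : (n : ℚ) * ((n : ℚ) - 1) * ((n : ℚ) - 2) ≠ 0 := ne_of_gt hD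
    have hdiv : E / 96 / ((n : ℚ) * ((n : ℚ) - 1) * ((n : ℚ) - 2) / 6)
        = E / (16 * ((n : ℚ) * ((n : ℚ) - 1) * ((n : ℚ) - 2))) := by
      rw [div_div_eq_mul_div, div_mul_eq_mul_div, div_div]
      rw [show (96 : ℚ) * ((n : ℚ) * ((n : ℚ) - 1) * ((n : ℚ) - 2))
            = 6 * (16 * ((n : ℚ) * ((n : ℚ) - 1) * ((n : ℚ) - 2))) by ring,
        mul_comm E 6, mul_div_mul_left _ _ (by norm_num : (6 : ℚ) ≠ 0)]
    rw [hdiv]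
    have hden : (0 : ℚ) < 16 * ((n : ℚ) * ((n : ℚ) - 1) * ((n : ℚ) - 2)) := by linarith
    have hne0 : (n : ℚ) ≠ 0 := ne_of_gt hq0
    constructor
    · rw [le_div_iff₀ hden]
      have expand : ((13 : ℚ) / 16 - 60 / n) * (16 * ((n : ℚ) * ((n : ℚ) - 1) * ((n : ℚ) - 2)))
          = 13 * ((n : ℚ) * ((n : ℚ) - 1) * ((n : ℚ) - 2))
            - 960 * (((n : ℚ) - 1) * ((n : ℚ) - 2)) := by
        field_simp
        ring
      rw [expand]
      nlinarith [mul_nonneg (by linarith : (0 : ℚ) ≤ (n : ℚ) - 3)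
        (by linarith : (0 : ℚ) ≤ (n : ℚ))]
    · rw [div_le_iff₀ hden]
      have expand : ((13 : ℚ) / 16 + 60 / n) * (16 * ((n : ℚ) * ((n : ℚ) - 1) * ((n : ℚ) - 2)))
          = 13 * ((n : ℚ) * ((n : ℚ) - 1) * ((n : ℚ) - 2))
            + 960 * (((n : ℚ) - 1) * ((n : ℚ) - 2)) := by
        field_simp
        ring
      rw [expand]
      nlinarith [mul_nonneg (by linarith : (0 : ℚ) ≤ (n : ℚ) - 3)
        (by linarith : (0 : ℚ) ≤ (n : ℚ)), sq_nonneg ((n : ℚ) - 3)]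
  refine tendsto_of_tendsto_of_tendsto_of_le_of_le' hlb hub ?_ ?_
  · filter_upwards [Filter.eventually_ge_atTop 3] with n hn using (main n hn).1
  · filter_upwards [Filter.eventually_ge_atTop 3] with n hn using (main n hn).2
end
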